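/- arXiv:2308.01998 — 9 statements merged into one kernel-verified Lean document; each statement's English description precedes it below -/
import Mathlib

section
/- Let J be the symmetric 3×3 Jacobian of the star-shaped network with M = 3, i.e. J_{ik} = Σ_{j=1}^{3} β_j φ_{ij} φ_{kj} − γ·δ_{ik}. Assume 0 < β0 < γ (so R0 = β0/γ < 1), ζ·β0 > γ, and ζ < 1 + 3(1−R0)/R0. If φ0 ∈ (0, 1/2] and |φ0 − 1/3| < φ̃3, then every eigenvalue of J is negative (equivalently, J is negative definite). -/
/-!
Swapping the two leaves commutes with `J`, so `J` splits into the antisymmetric direction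
`(1, -1, 0)`, with eigenvalue `β0 (1 - φ0)² - γ < 0`, and a symmetric `2 × 2` block. Writing
`u = 3 φ0 - 1`, three times the determinant of this block is
`γ (3γ - 2β0 - ζβ0) - (2γζβ0 + γβ0 - 3ζβ0²) u²`, positive exactly when `|φ0 - 1/3| < φ̃3`, while the
same block of `J + γ` has determinant `β0 · ζβ0 · u²`, which this condition bounds by `γ²`. The two
determinant facts force the trace of the block to be negative, so the block, and hence `J`, is
negative definite.
-/

open Matrix

/-- Flux matrix of the star-shaped network with `M = 3`. -/
noncomputable def starFlux3 (φ0 : ℝ) : Matrix (Fin 3) (Fin 3) ℝ :=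
  !![1 - φ0, 0, φ0; 0, 1 - φ0, φ0; φ0, φ0, 1 - 2 * φ0]

/-- Infection rates: `β₁ = β₂ = β0`, `β₃ = ζ·β0`. -/
noncomputable def starBeta3 (β0 ζ : ℝ) : Fin 3 → ℝ := ![β0, β0, ζ * β0]

/-- Jacobian of the infected subsystem at the disease-free equilibrium:
`J_{ik} = Σ_j β_j φ_{ij} φ_{kj} − γ·δ_{ik}`. -/
noncomputable def starJac3 (β0 ζ γ φ0 : ℝ) : Matrix (Fin 3) (Fin 3) ℝ :=
  Matrix.of fun i k =>
    (∑ j, starBeta3 β0 ζ j * starFlux3 φ0 i j * starFlux3 φ0 k j)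
      - γ * (if i = k then 1 else 0)

theorem posDef_neg_of_swap_symm {a b c d : ℝ} (hab : a - b < 0) (hsum : a + b < 0)
    (hdet : 2 * c ^ 2 < (a + b) * d) : (-!![a, b, c; b, a, c; c, c, d]).PosDef := by
  refine .of_dotProduct_mulVec_pos ?_ fun x hx => ?_
  · ext i j; fin_cases i <;> fin_cases j <;> rfl
  have hQ : -2 * (a + b) * (star x ⬝ᵥ (-!![a, b, c; b, a, c; c, c, d] *ᵥ x)) =
      (a + b) * (a - b) * (x 0 - x 1) ^ 2 + ((a + b) * (x 0 + x 1) + 2 * c * x 2) ^ 2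
        + 2 * ((a + b) * d - 2 * c ^ 2) * x 2 ^ 2 := by
    simp only [dotProduct, mulVec, Fin.sum_univ_three, Pi.star_apply, star_trivial,
      Matrix.neg_apply, of_apply, cons_val', cons_val_fin_one, cons_val_zero, cons_val_one,
      cons_val, Fin.isValue]
    ring
  have hs : 0 < (a + b) * (a - b) := mul_pos_of_neg_of_neg hsum hab
  have ht : 0 < 2 * ((a + b) * d - 2 * c ^ 2) := by linarith
  refine pos_of_mul_pos_right (hQ ▸ ?_ : 0 < -2 * (a + b) * _) (by linarith)
  by_contra! hle
  obtain ⟨h01, hmix, h2⟩ :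
      x 0 - x 1 = 0 ∧ (a + b) * (x 0 + x 1) + 2 * c * x 2 = 0 ∧ x 2 = 0 := by
    refine ⟨?_, ?_, ?_⟩ <;>
      refine pow_eq_zero_iff two_ne_zero |>.mp (le_antisymm ?_ (sq_nonneg _)) <;>
      nlinarith [mul_nonneg hs.le (sq_nonneg (x 0 - x 1)), mul_nonneg ht.le (sq_nonneg (x 2)),
        sq_nonneg ((a + b) * (x 0 + x 1) + 2 * c * x 2)]
  have h0 : x 0 + x 1 = 0 := by simpa [h2, hsum.ne] using hmix
  refine hx (funext fun i => ?_)
  fin_cases i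
  all_goals
    simp only [Fin.zero_eta, Fin.mk_one, Fin.reduceFinMk, Fin.isValue, Pi.zero_apply]
    linarith

open scoped MatrixOrder in
theorem neg_of_mem_spectrum_of_posDef_neg {n : Type*} [Fintype n] [DecidableEq n]
    {A : Matrix n n ℝ} (hA : (-A).PosDef) {μ : ℝ} (hμ : μ ∈ spectrum ℝ A) : μ < 0 := by
  have hneg : -μ ∈ spectrum ℝ (-A) := by
    rw [← spectrum.neg_eq]
    simpa using hμ
  linarith [hA.isStrictlyPositive.spectrum_pos hneg]

-- `e`, `f` are the diagonal entries and `g` the squared off-diagonal entry of a symmetric `2 × 2`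
-- matrix `A`: `det A > 0` and `det (A + γ) < γ²` make `A` negative definite.
theorem lt_zero_of_det_pos_of_det_add_lt {e f g γ : ℝ} (hγ : 0 < γ) (hg : 0 ≤ g)
    (hdet : g < e * f) (hshift : (e + γ) * (f + γ) - g < γ ^ 2) : e < 0 := by
  have htrace : e + f < 0 := neg_of_mul_neg_right (by nlinarith : γ * (e + f) < 0) hγ.le
  by_contra! he
  nlinarith [mul_nonpos_of_nonneg_of_nonpos he (by linarith : f ≤ 0)]

theorem mul_sq_lt_of_abs_sub_lt {x N D : ℝ} (hD : 0 < D) (h : |x - 1 / 3| < 1 / 3 * √(N / D)) :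
    D * (3 * x - 1) ^ 2 < N := by
  rw [← lt_div_iff₀' hD]
  refine Real.sq_lt.2 (abs_lt.1 ?_)
  rw [show 3 * x - 1 = 3 * (x - 1 / 3) by ring, abs_mul, abs_of_pos three_pos]
  linarith

theorem starJac3_eq (β0 ζ γ φ0 : ℝ) :
    starJac3 β0 ζ γ φ0 =
      let a := β0 * (1 - φ0) ^ 2 + ζ * β0 * φ0 ^ 2 - γ
      let b := ζ * β0 * φ0 ^ 2
      let c := β0 * φ0 * (1 - φ0) + ζ * β0 * φ0 * (1 - 2 * φ0)
      let d := 2 * β0 * φ0 ^ 2 + ζ * β0 * (1 - 2 * φ0) ^ 2 - γ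
      !![a, b, c; b, a, c; c, c, d] := by
  ext i k
  fin_cases i <;> fin_cases k <;>
    simp only [starJac3, starBeta3, starFlux3, of_apply, cons_val', cons_val_fin_one,
      Fin.sum_univ_three, cons_val_zero, cons_val_one, cons_val, Fin.isValue, Fin.zero_eta,
      Fin.mk_one, Fin.reduceFinMk, Fin.reduceEq, ↓reduceIte] <;> ring

theorem star3_block_ineqs {B W γ p : ℝ} (hB : 0 < B) (hBγ : B < γ) (hγW : γ < W)
    (hp0 : 0 ≤ p) (hp1 : p ≤ 1 / 2) (hden : 0 < 2 * γ * W + γ * B - 3 * B * W)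
    (hu : (2 * γ * W + γ * B - 3 * B * W) * (3 * p - 1) ^ 2 < γ * (3 * γ - 2 * B - W)) :
    let a := B * (1 - p) ^ 2 + W * p ^ 2 - γ
    let b := W * p ^ 2
    let c := B * p * (1 - p) + W * p * (1 - 2 * p)
    let d := 2 * B * p ^ 2 + W * (1 - 2 * p) ^ 2 - γ
    a - b < 0 ∧ a + b < 0 ∧ 2 * c ^ 2 < (a + b) * d := by
  intro a b c d
  have hγ : 0 < γ := hB.trans hBγ
  have hW : 0 < W := hγ.trans hγW
  have hanti : a - b < 0 := by
    have : (1 - p) ^ 2 ≤ 1 := by nlinarith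
    nlinarith
  have hgap : 0 < B * (γ - W) ^ 2 + 2 * W * (γ - B) ^ 2 := by
    have := sub_ne_zero.mpr hBγ.ne'
    positivity
  have hnet : B * W * (3 * p - 1) ^ 2 < γ ^ 2 := by
    refine lt_of_mul_lt_mul_right (?_ : _ * (2 * γ * W + γ * B - 3 * B * W) < _) hden.le
    calc B * W * (3 * p - 1) ^ 2 * (2 * γ * W + γ * B - 3 * B * W)
        = B * W * ((2 * γ * W + γ * B - 3 * B * W) * (3 * p - 1) ^ 2) := by ring
      _ < B * W * (γ * (3 * γ - 2 * B - W)) := mul_lt_mul_of_pos_left hu (mul_pos hB hW)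
      _ = γ ^ 2 * (2 * γ * W + γ * B - 3 * B * W)
            - γ * (B * (γ - W) ^ 2 + 2 * W * (γ - B) ^ 2) := by ring
      _ < γ ^ 2 * (2 * γ * W + γ * B - 3 * B * W) := sub_lt_self _ (mul_pos hγ hgap)
  have hdet : 2 * c ^ 2 < (a + b) * d := by
    have : (a + b) * d - 2 * c ^ 2 =
        (γ * (3 * γ - 2 * B - W) - (2 * γ * W + γ * B - 3 * B * W) * (3 * p - 1) ^ 2) / 3 := by
      ring
    linarith
  have hshift : (a + b + γ) * (d + γ) - 2 * c ^ 2 = B * W * (3 * p - 1) ^ 2 := by ring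
  exact ⟨hanti, lt_zero_of_det_pos_of_det_add_lt hγ (by positivity) hdet (by linarith), hdet⟩

theorem posDef_neg_starJac3 {β0 ζ γ φ0 : ℝ} (hβ0 : 0 < β0) (hβγ : β0 < γ) (hζβ : γ < ζ * β0)
    (hφ0 : 0 ≤ φ0) (hφ1 : φ0 ≤ 1 / 2)
    (hden : 0 < 2 * γ * (ζ * β0) + γ * β0 - 3 * β0 * (ζ * β0))
    (hu : (2 * γ * (ζ * β0) + γ * β0 - 3 * β0 * (ζ * β0)) * (3 * φ0 - 1) ^ 2 <
      γ * (3 * γ - 2 * β0 - ζ * β0)) :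
    (-starJac3 β0 ζ γ φ0).PosDef := by
  obtain ⟨hanti, hsum, hdet⟩ := star3_block_ineqs hβ0 hβγ hζβ hφ0 hφ1 hden hu
  rw [starJac3_eq]
  exact posDef_neg_of_swap_symm hanti hsum hdet

theorem phiTilde3_radicand_eq {β0 γ ζ : ℝ} (hγ : γ ≠ 0) :
    (3 * (1 - β0 / γ) - (β0 / γ) * (ζ - 1)) / ((β0 / γ) * (3 * ζ * (1 - β0 / γ) - (ζ - 1))) =
      γ * (3 * γ - 2 * β0 - ζ * β0) / (2 * γ * (ζ * β0) + γ * β0 - 3 * β0 * (ζ * β0)) := by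
  have hnum : 3 * (1 - β0 / γ) - (β0 / γ) * (ζ - 1) = γ * (3 * γ - 2 * β0 - ζ * β0) / γ ^ 2 := by
    field_simp; ring
  have hden : (β0 / γ) * (3 * ζ * (1 - β0 / γ) - (ζ - 1)) =
      (2 * γ * (ζ * β0) + γ * β0 - 3 * β0 * (ζ * β0)) / γ ^ 2 := by
    field_simp; ring
  rw [hnum, hden, div_div_div_cancel_right₀ (pow_ne_zero 2 hγ)]

theorem star3_DFE_stable (β0 γ ζ φ0 : ℝ)
    (hβ0 : 0 < β0) (hβγ : β0 < γ) (hζβ : γ < ζ * β0)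
    (hζcrit : ζ < 1 + 3 * (1 - β0 / γ) / (β0 / γ))
    (hφ0 : 0 < φ0) (hφ1 : φ0 ≤ 1 / 2)
    (hnear : |φ0 - 1 / 3| <
      (1 / 3) * Real.sqrt ((3 * (1 - β0 / γ) - (β0 / γ) * (ζ - 1)) /
        ((β0 / γ) * (3 * ζ * (1 - β0 / γ) - (ζ - 1))))) :
    ∀ μ ∈ spectrum ℝ (starJac3 β0 ζ γ φ0), μ < 0 := by
  have hγ : 0 < γ := hβ0.trans hβγ
  have hcrit : ζ * β0 < 3 * γ - 2 * β0 := by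
    rwa [show 1 + 3 * (1 - β0 / γ) / (β0 / γ) = (3 * γ - 2 * β0) / β0 by field_simp; ring,
      lt_div_iff₀ hβ0] at hζcrit
  have hden : 0 < 2 * γ * (ζ * β0) + γ * β0 - 3 * β0 * (ζ * β0) := by
    nlinarith [mul_pos (sub_pos.2 hζβ) (sub_pos.2 hβγ), mul_pos hγ (sub_pos.2 hcrit)]
  rw [phiTilde3_radicand_eq hγ.ne'] at hnear
  have hu := mul_sq_lt_of_abs_sub_lt hden hnear
  exact fun μ ↦ neg_of_mem_spectrum_of_posDef_neg
    (posDef_neg_starJac3 hβ0 hβγ hζβ hφ0.le hφ1 hden hu)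
end

section
/- Let J be the symmetric 3×3 Jacobian of the star-shaped network with M = 3, i.e. J_{ik} = Σ_{j=1}^{3} β_j φ_{ij} φ_{kj} − γ·δ_{ik}, and assume 0 < β0 < γ and ζ·β0 > γ. (i) If moreover ζ < 1 + 3(1−R0)/R0, φ0 ∈ (0, 1/2] and |φ0 − 1/3| > φ̃3, then J has a positive eigenvalue. (ii) If instead ζ ≥ 1 + 3(1−R0)/R0, then for every φ0 ∈ (0, 1/2], J has a nonnegative eigenvalue. -/
/-!
The Jacobian is invariant under swapping the two leaves, so it has the shape
`!![a, b, c; b, a, c; c, c, d]` and its characteristic polynomial factors as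
`(μ - (a - b)) * ((μ - (a + b)) * (μ - d) - 2 * c ^ 2)`. The larger root of the quadratic factor
is positive (nonnegative) as soon as its constant term `(a + b) * d - 2 * c ^ 2` is negative
(nonpositive). For the star network, with `x = φ0 - 1/3`, this constant term is
`γ² / 3 * (n - 9 * m * x²)`, where `n / m` is the radicand in `φ̃3 = (1/3) * √(n / m)`.
Below the critical `ζ` both `n` and `m` are positive, so the term is negative exactly when
`|x| > φ̃3`. At or above it `n ≤ 0`, and the term is affine in `x² ∈ [0, 1/9]`, equal to
`γ² n / 3 ≤ 0` at `x² = 0` and to `γ² (1 - R0) (1 - ζ R0) < 0` at `x² = 1/9`.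
-/

open Matrix

theorem Matrix.eval_charpoly_swapSymm {R : Type*} [CommRing R] (a b c d μ : R) :
    (!![a, b, c; b, a, c; c, c, d]).charpoly.eval μ
      = (μ - (a - b)) * ((μ - (a + b)) * (μ - d) - 2 * c ^ 2) := by
  rw [eval_charpoly, det_fin_three]
  simp only [scalar_apply, sub_apply, diagonal_apply_eq, of_apply, cons_val', cons_val_zero,
    cons_val_fin_one, cons_val_one, cons_val, Fin.isValue, Fin.reduceEq, ne_eq, not_false_eq_true,
    diagonal_apply_ne]
  ring

noncomputable def upperRoot (a b k : ℝ) : ℝ := (a + b + √((a - b) ^ 2 + 4 * k)) / 2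

theorem upperRoot_sub_mul_sub {a b k : ℝ} (hk : 0 ≤ k) :
    (upperRoot a b k - a) * (upperRoot a b k - b) = k := by
  have hs := Real.sq_sqrt (by positivity : 0 ≤ (a - b) ^ 2 + 4 * k)
  unfold upperRoot
  linear_combination hs / 4

theorem upperRoot_nonneg {a b k : ℝ} (h : a * b ≤ k) : 0 ≤ upperRoot a b k := by
  have := Real.abs_le_sqrt (by nlinarith : (a + b) ^ 2 ≤ (a - b) ^ 2 + 4 * k)
  unfold upperRoot
  linarith [neg_abs_le (a + b)]

theorem upperRoot_pos {a b k : ℝ} (h : a * b < k) : 0 < upperRoot a b k := by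
  have := (Real.lt_sqrt (abs_nonneg (a + b))).2
    (by rw [sq_abs]; nlinarith : |a + b| ^ 2 < (a - b) ^ 2 + 4 * k)
  unfold upperRoot
  linarith [neg_abs_le (a + b)]

theorem upperRoot_mem_spectrum_swapSymm (a b c d : ℝ) :
    upperRoot (a + b) d (2 * c ^ 2) ∈ spectrum ℝ !![a, b, c; b, a, c; c, c, d] := by
  rw [mem_spectrum_iff_isRoot_charpoly, Polynomial.IsRoot, eval_charpoly_swapSymm,
    upperRoot_sub_mul_sub (by positivity), sub_self, mul_zero]

theorem exists_pos_mem_spectrum_swapSymm {a b c d : ℝ} (h : (a + b) * d < 2 * c ^ 2) :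
    ∃ μ ∈ spectrum ℝ !![a, b, c; b, a, c; c, c, d], 0 < μ :=
  ⟨_, upperRoot_mem_spectrum_swapSymm a b c d, upperRoot_pos h⟩

theorem exists_nonneg_mem_spectrum_swapSymm {a b c d : ℝ} (h : (a + b) * d ≤ 2 * c ^ 2) :
    ∃ μ ∈ spectrum ℝ !![a, b, c; b, a, c; c, c, d], 0 ≤ μ :=
  ⟨_, upperRoot_mem_spectrum_swapSymm a b c d, upperRoot_nonneg h⟩

-- With `R = R0`: `φ̃3 = (1/3) * √(starNum3 R ζ / starDen3 R ζ)`.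
def starNum3 (R ζ : ℝ) : ℝ := 3 * (1 - R) - R * (ζ - 1)

def starDen3 (R ζ : ℝ) : ℝ := R * (3 * ζ * (1 - R) - (ζ - 1))

section Threshold

variable {R ζ : ℝ}

theorem starNum3_pos_of_lt (hR : 0 < R) (h : ζ < 1 + 3 * (1 - R) / R) : 0 < starNum3 R ζ := by
  rw [← sub_lt_iff_lt_add', lt_div_iff₀ hR] at h
  unfold starNum3
  linarith

theorem starNum3_nonpos_of_le (hR : 0 < R) (h : 1 + 3 * (1 - R) / R ≤ ζ) :
    starNum3 R ζ ≤ 0 := by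
  rw [← le_sub_iff_add_le', div_le_iff₀ hR] at h
  unfold starNum3
  linarith

theorem starDen3_eq : starDen3 R ζ = 6 * (1 - R) ^ 2 + (3 * R - 2) * starNum3 R ζ := by
  unfold starNum3 starDen3
  ring

theorem starDen3_pos (hR : 0 < R) (hR1 : R < 1) (hζ : 0 ≤ ζ) (hn : 0 < starNum3 R ζ) :
    0 < starDen3 R ζ := by
  rcases le_or_gt 2 (3 * R) with h | h
  · rw [starDen3_eq]
    have := sub_ne_zero.2 hR1.ne'
    exact add_pos_of_pos_of_nonneg (by positivity) (mul_nonneg (by linarith) hn.le)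
  · have := mul_nonneg hζ (by linarith : (0 : ℝ) ≤ 2 - 3 * R)
    exact mul_pos hR (by linarith)

theorem starNum3_sub_starDen3 : starNum3 R ζ - starDen3 R ζ = 3 * (1 - R) * (1 - ζ * R) := by
  unfold starNum3 starDen3
  ring

theorem starNum3_sub_mul_sq_nonpos {x : ℝ} (hR1 : R ≤ 1) (hζR : 1 ≤ ζ * R)
    (hn : starNum3 R ζ ≤ 0) (hx : x ^ 2 ≤ 1 / 9) : starNum3 R ζ - 9 * starDen3 R ζ * x ^ 2 ≤ 0 := by
  have hedge : starNum3 R ζ - starDen3 R ζ ≤ 0 := by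
    rw [starNum3_sub_starDen3]
    exact mul_nonpos_of_nonneg_of_nonpos (by linarith) (by linarith)
  have hsplit : starNum3 R ζ - 9 * starDen3 R ζ * x ^ 2
      = (1 - 9 * x ^ 2) * starNum3 R ζ + 9 * x ^ 2 * (starNum3 R ζ - starDen3 R ζ) := by ring
  rw [hsplit]
  exact add_nonpos (mul_nonpos_of_nonneg_of_nonpos (by linarith) hn)
    (mul_nonpos_of_nonneg_of_nonpos (by positivity) hedge)

end Threshold

theorem lt_mul_sq_of_sqrt_div_lt {p q x : ℝ} (hq : 0 < q) (h : 1 / 3 * √(p / q) < |x|) :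
    p < 9 * q * x ^ 2 := by
  have hx : 0 < 3 * |x| := by linarith [Real.sqrt_nonneg (p / q)]
  have := (Real.sqrt_lt' hx).1 (by linarith)
  rw [div_lt_iff₀ hq, mul_pow, sq_abs] at this
  linarith

section StarJacobian

variable {β0 ζ γ φ0 : ℝ}

theorem starJac3_eq_s1 :
    starJac3 β0 ζ γ φ0 =
      !![β0 * (1 - φ0) ^ 2 + ζ * β0 * φ0 ^ 2 - γ, ζ * β0 * φ0 ^ 2,
          β0 * (1 - φ0) * φ0 + ζ * β0 * φ0 * (1 - 2 * φ0);
        ζ * β0 * φ0 ^ 2, β0 * (1 - φ0) ^ 2 + ζ * β0 * φ0 ^ 2 - γ,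
          β0 * (1 - φ0) * φ0 + ζ * β0 * φ0 * (1 - 2 * φ0);
        β0 * (1 - φ0) * φ0 + ζ * β0 * φ0 * (1 - 2 * φ0),
          β0 * (1 - φ0) * φ0 + ζ * β0 * φ0 * (1 - 2 * φ0),
          2 * β0 * φ0 ^ 2 + ζ * β0 * (1 - 2 * φ0) ^ 2 - γ] := by
  ext i k
  fin_cases i <;> fin_cases k <;>
    simp only [starJac3, starBeta3, starFlux3, of_apply, Fin.sum_univ_three, cons_val',
      cons_val_fin_one, cons_val_zero, cons_val_one, cons_val, Fin.isValue, Fin.zero_eta,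
      Fin.mk_one, Fin.reduceFinMk, Fin.reduceEq, ↓reduceIte] <;> ring

theorem starBlockDet3_eq (hγ : γ ≠ 0) :
    ((β0 * (1 - φ0) ^ 2 + ζ * β0 * φ0 ^ 2 - γ) + ζ * β0 * φ0 ^ 2)
        * (2 * β0 * φ0 ^ 2 + ζ * β0 * (1 - 2 * φ0) ^ 2 - γ)
      - 2 * (β0 * (1 - φ0) * φ0 + ζ * β0 * φ0 * (1 - 2 * φ0)) ^ 2
      = γ ^ 2 / 3 * (starNum3 (β0 / γ) ζ - 9 * starDen3 (β0 / γ) ζ * (φ0 - 1 / 3) ^ 2) := by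
  unfold starNum3 starDen3
  field_simp
  ring

theorem exists_pos_mem_spectrum_starJac3 (hγ : γ ≠ 0)
    (h : starNum3 (β0 / γ) ζ < 9 * starDen3 (β0 / γ) ζ * (φ0 - 1 / 3) ^ 2) :
    ∃ μ ∈ spectrum ℝ (starJac3 β0 ζ γ φ0), 0 < μ := by
  rw [starJac3_eq_s1]
  refine exists_pos_mem_spectrum_swapSymm (sub_neg.1 ?_)
  rw [starBlockDet3_eq hγ]
  exact mul_neg_of_pos_of_neg (by positivity) (sub_neg.2 h)

theorem exists_nonneg_mem_spectrum_starJac3 (hγ : γ ≠ 0)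
    (h : starNum3 (β0 / γ) ζ - 9 * starDen3 (β0 / γ) ζ * (φ0 - 1 / 3) ^ 2 ≤ 0) :
    ∃ μ ∈ spectrum ℝ (starJac3 β0 ζ γ φ0), 0 ≤ μ := by
  rw [starJac3_eq_s1]
  refine exists_nonneg_mem_spectrum_swapSymm (sub_nonpos.1 ?_)
  rw [starBlockDet3_eq hγ]
  exact mul_nonpos_of_nonneg_of_nonpos (by positivity) h

end StarJacobian

theorem star3_DFE_unstable (β0 γ ζ : ℝ)
    (hβ0 : 0 < β0) (hβγ : β0 < γ) (hζβ : γ < ζ * β0) :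
    -- (i) below the critical ζ, flux values away from the stability interval
    -- yield a positive eigenvalue
    (∀ φ0 : ℝ, ζ < 1 + 3 * (1 - β0 / γ) / (β0 / γ) →
      0 < φ0 → φ0 ≤ 1 / 2 →
      (1 / 3) * Real.sqrt ((3 * (1 - β0 / γ) - (β0 / γ) * (ζ - 1)) /
        ((β0 / γ) * (3 * ζ * (1 - β0 / γ) - (ζ - 1)))) < |φ0 - 1 / 3| →
      ∃ μ ∈ spectrum ℝ (starJac3 β0 ζ γ φ0), 0 < μ) ∧
    -- (ii) at or above the critical ζ, every flux value yields a nonnegative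
    -- eigenvalue
    (1 + 3 * (1 - β0 / γ) / (β0 / γ) ≤ ζ →
      ∀ φ0 : ℝ, 0 < φ0 → φ0 ≤ 1 / 2 →
      ∃ μ ∈ spectrum ℝ (starJac3 β0 ζ γ φ0), 0 ≤ μ) := by
  have hγ : 0 < γ := hβ0.trans hβγ
  have hR : 0 < β0 / γ := div_pos hβ0 hγ
  have hR1 : β0 / γ < 1 := (div_lt_one hγ).2 hβγ
  have hζR : 1 < ζ * (β0 / γ) := by rwa [mul_div_assoc', one_lt_div hγ]
  refine ⟨fun φ0 hcrit _ _ hfar => ?_, fun hcrit φ0 hφ0 hφ0' => ?_⟩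
  · have hn := starNum3_pos_of_lt hR hcrit
    have hζ : 0 ≤ ζ := (pos_of_mul_pos_left (by linarith) hR.le).le
    exact exists_pos_mem_spectrum_starJac3 hγ.ne'
      (lt_mul_sq_of_sqrt_div_lt (starDen3_pos hR hR1 hζ hn) hfar)
  · have hx : (φ0 - 1 / 3) ^ 2 ≤ 1 / 9 := by nlinarith
    exact exists_nonneg_mem_spectrum_starJac3 hγ.ne'
      (starNum3_sub_mul_sq_nonpos hR1.le hζR.le (starNum3_nonpos_of_le hR hcrit) hx)
end

section
/- For the star-shaped network with M = 3 evaluated at the critical flux φ0 = 1/3, the characteristic polynomial of the Jacobian J factors as det(X·I − J) = (X − (4β0/9 − γ)) · (X − (β0·(2+ζ)/3 − γ)) · (X + γ); in particular the eigenvalues of J at φ0 = 1/3 are 4β0/9 − γ, β0·(2+ζ)/3 − γ, and −γ. -/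
/-!
`J + γ I = Φ diag(β) Φᵀ`, and at `φ0 = 1/3` this matrix has the eigenvectors `(1, -1, 0)`,
`(1, 1, 1)`, `(1, 1, -2)` with eigenvalues `4β0/9`, `β0(2+ζ)/3`, `0`. Hence its characteristic
polynomial splits, and shifting by `γ` gives that of `J`.
-/

open Matrix Polynomial

lemma Matrix.charpoly_eq_prod_of_mul_eq_mul_diagonal {n R : Type*} [Fintype n] [DecidableEq n]
    [CommRing R] {A P : Matrix n n R} {d : n → R} (hP : IsUnit P.det)
    (h : A * P = P * diagonal d) : A.charpoly = ∏ i, (X - C (d i)) := by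
  have hconj : P⁻¹ * A * P = diagonal d := by
    rw [mul_assoc, h, ← mul_assoc, nonsing_inv_mul _ hP, one_mul]
  rw [← charpoly_diagonal, ← hconj, charpoly_mul_comm, ← mul_assoc, mul_nonsing_inv _ hP,
    one_mul]

lemma starJac3_eq_sub_scalar (β0 ζ γ φ0 : ℝ) :
    starJac3 β0 ζ γ φ0
      = starFlux3 φ0 * diagonal (starBeta3 β0 ζ) * (starFlux3 φ0)ᵀ - scalar (Fin 3) γ := by
  ext i k
  simp [starJac3, mul_apply, diagonal_apply, mul_comm, mul_left_comm]

lemma starFlux3_transpose (φ0 : ℝ) : (starFlux3 φ0)ᵀ = starFlux3 φ0 := by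
  ext i j
  fin_cases i <;> fin_cases j <;> rfl

def starEigenbasis3 : Matrix (Fin 3) (Fin 3) ℝ :=
  !![1, 1, 1; -1, 1, 1; 0, 1, -2]

lemma det_starEigenbasis3 : starEigenbasis3.det = -6 := by
  rw [starEigenbasis3, det_fin_three]
  simp only [of_apply, cons_val', cons_val_zero, cons_val_one, cons_val_two, head_cons,
    tail_cons, empty_val', cons_val_fin_one]
  norm_num

lemma starFlux3_third_mul_starEigenbasis3 (β0 ζ : ℝ) :
    starFlux3 (1 / 3) * diagonal (starBeta3 β0 ζ) * (starFlux3 (1 / 3))ᵀ * starEigenbasis3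
      = starEigenbasis3 * diagonal ![4 * β0 / 9, β0 * (2 + ζ) / 3, 0] := by
  rw [starFlux3_transpose]
  simp only [starFlux3, starBeta3, starEigenbasis3, diagonal_vec3, mul_fin_three]
  ring_nf

lemma charpoly_starFlux3_third (β0 ζ : ℝ) :
    (starFlux3 (1 / 3) * diagonal (starBeta3 β0 ζ) * (starFlux3 (1 / 3))ᵀ).charpoly
      = (X - C (4 * β0 / 9)) * (X - C (β0 * (2 + ζ) / 3)) * X := by
  rw [charpoly_eq_prod_of_mul_eq_mul_diagonal (by norm_num [det_starEigenbasis3])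
    (starFlux3_third_mul_starEigenbasis3 β0 ζ), Fin.prod_univ_three]
  simp

lemma charpoly_starJac3_third (β0 ζ γ : ℝ) :
    (starJac3 β0 ζ γ (1 / 3)).charpoly
      = (X - C (4 * β0 / 9 - γ)) * (X - C (β0 * (2 + ζ) / 3 - γ)) * (X + C γ) := by
  rw [starJac3_eq_sub_scalar, charpoly_sub_scalar, charpoly_starFlux3_third]
  simp only [mul_comp, sub_comp, X_comp, C_comp, map_sub]
  ring

/-- At the critical flux `φ0 = 1/3`, the characteristic polynomial of the
star-shaped `M = 3` Jacobian factors explicitly; in particular its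
eigenvalues are `4β0/9 − γ`, `β0(2+ζ)/3 − γ` and `−γ`. -/
theorem star3_charpoly_at_third (β0 ζ γ : ℝ) :
    (starJac3 β0 ζ γ (1 / 3)).charpoly
        = (X - C (4 * β0 / 9 - γ)) * (X - C (β0 * (2 + ζ) / 3 - γ)) * (X + C γ)
      ∧ spectrum ℝ (starJac3 β0 ζ γ (1 / 3))
        = {4 * β0 / 9 - γ, β0 * (2 + ζ) / 3 - γ, -γ} := by
  refine ⟨charpoly_starJac3_third β0 ζ γ, Set.ext fun x => ?_⟩
  rw [mem_spectrum_iff_isRoot_charpoly, charpoly_starJac3_third]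
  simp [sub_eq_zero, add_eq_zero_iff_eq_neg, or_assoc]
end

section
/- Let M ≥ 3 and let p, q, c0, c1 be real numbers. Let A be the M×M real symmetric matrix with A_{uv} = p for all u, v < M with u ≠ v, A_{uu} = p + c0 for u < M, A_{uM} = A_{Mu} = q for u < M, and A_{MM} = p + c1. Then the characteristic polynomial of A factors as det(X·I − A) = (X − c0)^{M−2} · (X² − (c0 + c1 + pM)·X + (c0·c1 + (M−1)·p·c1 + p·c0 + (M−1)·(p² − q²))). -/
open Matrix Polynomial

/-- The matrix with entries `p` among the first `M−1` indices (with `p + c0`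
on their diagonal), `q` in the last row and column off the corner, and
`p + c1` in the bottom-right corner. -/
noncomputable def starNGMShape (M : ℕ) (p q c0 c1 : ℝ) :
    Matrix (Fin M) (Fin M) ℝ :=
  Matrix.of fun u v =>
    if u = v then (if (u : ℕ) = M - 1 then p + c1 else p + c0)
    else if (u : ℕ) = M - 1 ∨ (v : ℕ) = M - 1 then q else p

/-!
Write `A = c0 • 1 + W B Wᵀ`, where `W` is the `0/1` incidence matrix of the partition of the
indices into leaves and hub and `B = !![p, q; q, p + c1 - c0]`. Since `W B Wᵀ` and `B Wᵀ W` have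
the same characteristic polynomial up to a factor `X ^ (M - 2)`, and `Wᵀ W = diag(M - 1, 1)`, the
characteristic polynomial of `A` is `(X - c0) ^ (M - 2)` times that of the `2 × 2` matrix
`B * diag(M - 1, 1)`, shifted by `c0`.
-/

namespace Matrix

variable {R : Type*} [CommRing R] {m n : Type*}

theorem charpoly_scalar_add_mul [Fintype m] [DecidableEq m] [Fintype n] [DecidableEq n]
    (c : R) (W : Matrix n m R) (K : Matrix m n R) (h : Fintype.card m ≤ Fintype.card n) :
    (scalar n c + W * K).charpoly
      = (X - C c) ^ (Fintype.card n - Fintype.card m) * (K * W).charpoly.comp (X - C c) := by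
  have hshift : (W * K).charpoly = (scalar n c + W * K).charpoly.comp (X + C c) := by
    rw [← charpoly_sub_scalar, add_sub_cancel_left]
  calc (scalar n c + W * K).charpoly
      = ((scalar n c + W * K).charpoly.comp (X + C c)).comp (X - C c) := by
        rw [comp_assoc]; simp
    _ = _ := by rw [← hshift, charpoly_mul_comm_of_le W K h, mul_comp]; simp

theorem one_submatrix_mul_mul_one_submatrix [Fintype m] [DecidableEq m] (f : n → m)
    (B : Matrix m m R) :
    (1 : Matrix m m R).submatrix f id * B * (1 : Matrix m m R).submatrix id f
      = B.submatrix f f := by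
  ext i j
  simp [mul_apply, one_apply]

theorem one_submatrix_mul_one_submatrix [Fintype n] [DecidableEq m] (f : n → m) :
    (1 : Matrix m m R).submatrix id f * (1 : Matrix m m R).submatrix f id
      = diagonal fun a => ((Finset.univ.filter fun i => f i = a).card : R) := by
  ext a b
  simp only [mul_apply, submatrix_apply, id, one_apply, diagonal_apply, boole_mul, ← ite_and,
    Finset.sum_boole]
  by_cases hab : a = b
  · subst hab; simp [eq_comm]
  · rw [if_neg hab, Finset.filter_false_of_mem (by rintro i - ⟨rfl, rfl⟩; exact hab rfl),
      Finset.card_empty, Nat.cast_zero]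

theorem charpoly_scalar_add_submatrix [Fintype m] [DecidableEq m] [Fintype n] [DecidableEq n]
    (c : R) (B : Matrix m m R) (f : n → m) (h : Fintype.card m ≤ Fintype.card n) :
    (scalar n c + B.submatrix f f).charpoly
      = (X - C c) ^ (Fintype.card n - Fintype.card m)
        * (B * diagonal fun a => ((Finset.univ.filter fun i => f i = a).card : R)).charpoly.comp
          (X - C c) := by
  rw [← one_submatrix_mul_mul_one_submatrix, Matrix.mul_assoc, charpoly_scalar_add_mul c _ _ h,
    Matrix.mul_assoc, one_submatrix_mul_one_submatrix]

end Matrix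

def starBlock (M : ℕ) (i : Fin M) : Fin 2 := if (i : ℕ) = M - 1 then 1 else 0

theorem card_starBlock_eq_one {M : ℕ} (hM : 1 ≤ M) :
    (Finset.univ.filter fun i => starBlock M i = 1).card = 1 := by
  rw [Finset.card_eq_one]
  refine ⟨⟨M - 1, by omega⟩, ?_⟩
  ext i
  simp [starBlock, Fin.ext_iff]

theorem card_starBlock_eq {M : ℕ} (hM : 1 ≤ M) (a : Fin 2) :
    ((Finset.univ.filter fun i => starBlock M i = a).card : ℝ) = ![(M : ℝ) - 1, 1] a := by
  have hsplit := Finset.card_filter_add_card_filter_not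
    (s := (Finset.univ : Finset (Fin M))) fun i => starBlock M i = 1
  have hne : ∀ i, ¬starBlock M i = 1 ↔ starBlock M i = 0 := by
    intro i; unfold starBlock; split_ifs <;> simp
  simp only [hne, card_starBlock_eq_one hM, Finset.card_univ, Fintype.card_fin] at hsplit
  fin_cases a
  · simp only [Fin.zero_eta, Matrix.cons_val_zero]
    rw [eq_sub_iff_add_eq, add_comm]
    exact_mod_cast hsplit
  · simp [card_starBlock_eq_one hM]

theorem starNGMShape_eq_scalar_add_submatrix (M : ℕ) (p q c0 c1 : ℝ) :
    starNGMShape M p q c0 c1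
      = scalar (Fin M) c0 + !![p, q; q, p + c1 - c0].submatrix (starBlock M) (starBlock M) := by
  ext u v
  by_cases huv : u = v
  · subst huv
    by_cases hu : (u : ℕ) = M - 1 <;> simp [starNGMShape, starBlock, hu, add_comm]
  · have hhub : (u : ℕ) = M - 1 → (v : ℕ) ≠ M - 1 := fun hu hv =>
      huv (Fin.ext (hu.trans hv.symm))
    by_cases hu : (u : ℕ) = M - 1 <;> by_cases hv : (v : ℕ) = M - 1 <;>
      simp_all [starNGMShape, starBlock]

/-- Characteristic polynomial of the star-shaped next-generation-matrix
structure: `det(X·I − A) = (X − c0)^{M−2} · (X² − (c0+c1+pM)·X +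
(c0c1 + (M−1)pc1 + pc0 + (M−1)(p²−q²)))`. -/
theorem starNGMShape_charpoly (M : ℕ) (hM : 3 ≤ M) (p q c0 c1 : ℝ) :
    (starNGMShape M p q c0 c1).charpoly
      = (X - C c0) ^ (M - 2) *
        (X ^ 2 - C (c0 + c1 + p * (M : ℝ)) * X
          + C (c0 * c1 + ((M : ℝ) - 1) * p * c1 + p * c0
              + ((M : ℝ) - 1) * (p ^ 2 - q ^ 2))) := by
  have hcard : Fintype.card (Fin 2) ≤ Fintype.card (Fin M) := by
    simp only [Fintype.card_fin]; omega
  rw [starNGMShape_eq_scalar_add_submatrix, charpoly_scalar_add_submatrix c0 _ _ hcard]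
  simp_rw [Fintype.card_fin, card_starBlock_eq (by omega : 1 ≤ M)]
  have hB : !![p, q; q, p + c1 - c0] * diagonal ![(M : ℝ) - 1, 1]
      = !![p * (M - 1), q; q * (M - 1), p + c1 - c0] := by
    ext i j; fin_cases i <;> fin_cases j <;> simp
  rw [hB, charpoly_fin_two, trace_fin_two_of, det_fin_two_of]
  congr 1
  simp only [add_comp, sub_comp, mul_comp, pow_comp, X_comp, C_comp, one_comp,
    C_add, C_sub, C_mul, C_pow, C_1]
  ring
end

section
/- For the star-shaped network with M ≥ 3 nodes, let κ be the next generation matrix, κ_{ik} = (1/γ)·Σ_{j=1}^{M} β_j φ_{ij} φ_{kj}. Assume 0 < β0 < γ (so R0 = β0/γ < 1) and γ/β0 < ζ < ζcrit. If φ0 ∈ (0, 1/(M−1)] and |φ0 − 1/M| > φ̃, then κ has a real eigenvalue strictly greater than 1. -/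
open Matrix

/-- Flux matrix of the star-shaped network with `M` nodes: node `M`
(index `M-1`) is the center, `φ_{iM} = φ_{Mi} = φ0` for outer `i`,
`φ_{ii} = 1 − φ0` for outer `i`, `φ_{MM} = 1 − (M−1)φ0`, and all other
entries are `0`. -/
noncomputable def starFlux (M : ℕ) (φ0 : ℝ) : Matrix (Fin M) (Fin M) ℝ :=
  Matrix.of fun i k =>
    if i = k then
      (if (i : ℕ) = M - 1 then 1 - ((M : ℝ) - 1) * φ0 else 1 - φ0)
    else if (i : ℕ) = M - 1 ∨ (k : ℕ) = M - 1 then φ0 else 0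

/-- Infection rates: `β_i = β0` for outer nodes, `β_M = ζ·β0` at the center. -/
noncomputable def starBeta (M : ℕ) (β0 ζ : ℝ) : Fin M → ℝ :=
  fun i => if (i : ℕ) = M - 1 then ζ * β0 else β0

/-- Next generation matrix `κ_{ik} = (1/γ)·Σ_j β_j φ_{ij} φ_{kj}`. -/
noncomputable def ngm (M : ℕ) (β : Fin M → ℝ) (γ : ℝ)
    (φ : Matrix (Fin M) (Fin M) ℝ) : Matrix (Fin M) (Fin M) ℝ :=
  Matrix.of fun i k => (1 / γ) * ∑ j, β j * φ i j * φ k j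

lemma sum_ite_center (M : ℕ) (hM : 1 ≤ M) (A B : ℝ) :
    ∑ k : Fin M, (if (k : ℕ) = M - 1 then A else B) = A + ((M : ℝ) - 1) * B := by
  have hlt : M - 1 < M := by omega
  have h1 : ∀ k : Fin M, (if (k : ℕ) = M - 1 then A else B)
      = B + (if k = (⟨M - 1, hlt⟩ : Fin M) then A - B else 0) := by
    intro k
    by_cases h : (k : ℕ) = M - 1
    · simp [h, Fin.ext_iff]
    · simp [h, Fin.ext_iff]
  rw [Finset.sum_congr rfl fun k _ => h1 k, Finset.sum_add_distrib,
    Finset.sum_const, Finset.sum_ite_eq' Finset.univ]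
  simp [Finset.card_univ]
  have : (1:ℝ) ≤ (M:ℝ) := by exact_mod_cast hM
  ring


lemma star_col (M : ℕ) (hM : 3 ≤ M) (φ0 x y : ℝ) (j : Fin M) :
    ∑ k : Fin M, starFlux M φ0 k j * (if (k : ℕ) = M - 1 then y else x)
    = if (j : ℕ) = M - 1 then ((M : ℝ) - 1) * φ0 * x + (1 - ((M : ℝ) - 1) * φ0) * y
      else (1 - φ0) * x + φ0 * y := by
  have hlt : M - 1 < M := by omega
  set c : Fin M := ⟨M - 1, hlt⟩ with hc
  have hcv : (c : ℕ) = M - 1 := rfl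
  by_cases hj : j = c
  · subst hj
    have h1 : ∀ k : Fin M, starFlux M φ0 k c * (if (k : ℕ) = M - 1 then y else x)
        = if (k : ℕ) = M - 1 then (1 - ((M : ℝ) - 1) * φ0) * y else φ0 * x := by
      intro k
      by_cases hk : (k : ℕ) = M - 1
      · have : k = c := by simp [Fin.ext_iff, hk, hcv]
        simp [this, starFlux, hcv]
      · have : k ≠ c := by simp [Fin.ext_iff, hk, hcv]
        simp [starFlux, hk, hcv, this]
    rw [Finset.sum_congr rfl fun k _ => h1 k, sum_ite_center M (by omega)]
    rw [if_pos hcv]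
    ring
  · have hjv : (j : ℕ) ≠ M - 1 := by
      simpa [Fin.ext_iff, hcv] using hj
    have h0 : ∀ k ∈ Finset.univ, k ≠ j ∧ k ≠ c →
        starFlux M φ0 k j * (if (k : ℕ) = M - 1 then y else x) = 0 := by
      rintro k - ⟨hkj, hkc⟩
      have hkv : (k : ℕ) ≠ M - 1 := by simpa [Fin.ext_iff, hcv] using hkc
      simp [starFlux, hkj, hkv, hjv]
    rw [Finset.sum_eq_add_of_mem j c (Finset.mem_univ _) (Finset.mem_univ _) hj h0]
    simp [starFlux, hjv, hcv, hj, Ne.symm hj]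

lemma ngm_row (M : ℕ) (hM : 3 ≤ M) (β0 γ ζ φ0 x y : ℝ) (i : Fin M) :
    (ngm M (starBeta M β0 ζ) γ (starFlux M φ0)).mulVec
      (fun k => if (k : ℕ) = M - 1 then y else x) i
    = if (i : ℕ) = M - 1
      then (1/γ) * (ζ * β0 * (1 - ((M:ℝ)-1)*φ0) * (((M:ℝ)-1)*φ0*x + (1-((M:ℝ)-1)*φ0)*y)
            + ((M:ℝ)-1) * (β0 * φ0 * ((1-φ0)*x + φ0*y)))
      else (1/γ) * (β0 * (1-φ0) * ((1-φ0)*x + φ0*y)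
            + ζ * β0 * φ0 * (((M:ℝ)-1)*φ0*x + (1-((M:ℝ)-1)*φ0)*y)) := by
  have hlt : M - 1 < M := by omega
  set c : Fin M := ⟨M - 1, hlt⟩ with hc
  have hcv : (c : ℕ) = M - 1 := rfl
  have hswap : (ngm M (starBeta M β0 ζ) γ (starFlux M φ0)).mulVec
      (fun k => if (k : ℕ) = M - 1 then y else x) i
      = (1/γ) * ∑ j, starBeta M β0 ζ j * starFlux M φ0 i j *
          (∑ k, starFlux M φ0 k j * (if (k : ℕ) = M - 1 then y else x)) := by
    simp only [Matrix.mulVec, dotProduct, ngm, Matrix.of_apply, Finset.sum_mul,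
      Finset.mul_sum]
    rw [Finset.sum_comm]
    exact Finset.sum_congr rfl fun j _ => Finset.sum_congr rfl fun k _ => by ring
  rw [hswap, Finset.sum_congr rfl fun j _ => by rw [star_col M hM φ0 x y j]]
  by_cases hiv : (i : ℕ) = M - 1
  · have h1 : ∀ j : Fin M, starBeta M β0 ζ j * starFlux M φ0 i j *
        (if (j : ℕ) = M - 1 then ((M : ℝ) - 1) * φ0 * x + (1 - ((M : ℝ) - 1) * φ0) * y
          else (1 - φ0) * x + φ0 * y)
        = if (j : ℕ) = M - 1
          then ζ * β0 * (1 - ((M:ℝ)-1)*φ0) * (((M:ℝ)-1)*φ0*x + (1-((M:ℝ)-1)*φ0)*y)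
          else β0 * φ0 * ((1-φ0)*x + φ0*y) := by
      intro j
      by_cases hjv : (j : ℕ) = M - 1
      · have : i = j := by simp [Fin.ext_iff, hiv, hjv]
        simp [this, starBeta, starFlux, hjv]
      · have : i ≠ j := by rw [Ne, Fin.ext_iff, hiv]; omega
        have h2 : ¬(M - 1 = (j : ℕ)) := fun h => hjv h.symm
        simp [starBeta, starFlux, hjv, hiv, this, h2]
    rw [Finset.sum_congr rfl fun j _ => h1 j, sum_ite_center M (by omega),
      if_pos hiv]
  · have hic : i ≠ c := by simp [Fin.ext_iff, hiv, hcv]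
    have h0 : ∀ j ∈ Finset.univ, j ≠ i ∧ j ≠ c →
        starBeta M β0 ζ j * starFlux M φ0 i j *
        (if (j : ℕ) = M - 1 then ((M : ℝ) - 1) * φ0 * x + (1 - ((M : ℝ) - 1) * φ0) * y
          else (1 - φ0) * x + φ0 * y) = 0 := by
      rintro j - ⟨hji, hjc⟩
      have hjv : (j : ℕ) ≠ M - 1 := by simpa [Fin.ext_iff, hcv] using hjc
      simp [starBeta, starFlux, Ne.symm hji, hjv, hiv]
    rw [Finset.sum_eq_add_of_mem i c (Finset.mem_univ _) (Finset.mem_univ _) hic h0,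
      if_neg hiv]
    simp [starBeta, starFlux, hiv, hcv, hic]

/-- Star-shaped network, unstable regime: for `γ/β0 < ζ < ζcrit` and flux
far enough from `1/M`, the next generation matrix has a real eigenvalue
strictly greater than `1`. -/
theorem star_ngm_unstable (M : ℕ) (hM : 3 ≤ M) (β0 γ ζ φ0 : ℝ)
    (hβ0 : 0 < β0) (hβγ : β0 < γ)
    (hζlo : γ / β0 < ζ)
    (hζhi : ζ < 1 + (M : ℝ) * (1 - β0 / γ) / (β0 / γ))
    (hφlo : 0 < φ0) (hφhi : φ0 ≤ 1 / ((M : ℝ) - 1))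
    (hfar : (1 / (M : ℝ)) * Real.sqrt
        (((M : ℝ) * (1 - β0 / γ) - (β0 / γ) * (ζ - 1)) /
          ((β0 / γ) * ((M : ℝ) * ζ * (1 - β0 / γ) - (ζ - 1))))
      < |φ0 - 1 / (M : ℝ)|) :
    ∃ μ ∈ spectrum ℝ (ngm M (starBeta M β0 ζ) γ (starFlux M φ0)),
      1 < μ := by
  have hγ : 0 < γ := hβ0.trans hβγ
  have hγ0 : γ ≠ 0 := ne_of_gt hγ
  have hMR : (3:ℝ) ≤ (M:ℝ) := by exact_mod_cast hM
  have hM0 : (M:ℝ) ≠ 0 := by linarith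
  obtain ⟨R0, hR0⟩ : ∃ x : ℝ, x = β0 / γ := ⟨_, rfl⟩
  rw [← hR0] at hζhi hfar
  have hR0pos : 0 < R0 := hR0 ▸ div_pos hβ0 hγ
  have hR0lt : R0 < 1 := hR0 ▸ (div_lt_one hγ).2 hβγ
  have hζR0 : 1 < R0 * ζ := by
    rw [hR0, div_mul_eq_mul_div, lt_div_iff₀ hγ]
    have := (div_lt_iff₀ hβ0).1 hζlo
    linarith
  have hζ1 : 1 < ζ := by nlinarith
  have hc0 : R0 * (ζ - 1) < (M:ℝ) * (1 - R0) := by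
    have h2 : ζ - 1 < (M:ℝ)*(1-R0)/R0 := by linarith
    have h3 := (lt_div_iff₀ hR0pos).1 h2
    linarith
  have hE : 0 < (M:ℝ)*ζ*(1-R0) - (ζ-1) := by nlinarith
  have hm1 : (0:ℝ) < (M:ℝ) - 1 := by linarith
  obtain ⟨aa, haa⟩ : ∃ x : ℝ, x = 1 - φ0 := ⟨_, rfl⟩
  obtain ⟨dd, hdd⟩ : ∃ x : ℝ, x = 1 - ((M:ℝ)-1)*φ0 := ⟨_, rfl⟩
  have hdnn : (0:ℝ) ≤ dd := by
    rw [hdd]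
    have := (le_div_iff₀ hm1).1 hφhi
    linarith
  have hapos : (0:ℝ) < aa := by
    rw [haa]
    have h1 : 1/((M:ℝ)-1) ≤ 1/2 := by
      rw [div_le_div_iff₀ hm1 two_pos]; linarith
    linarith
  obtain ⟨P, hP⟩ : ∃ x : ℝ, x = R0*(aa^2 + ζ*((M:ℝ)-1)*φ0^2) := ⟨_, rfl⟩
  obtain ⟨Q, hQ⟩ : ∃ x : ℝ, x = R0*(φ0*(aa + ζ*dd)) := ⟨_, rfl⟩
  obtain ⟨S, hS⟩ : ∃ x : ℝ, x = R0*(((M:ℝ)-1)*φ0^2 + ζ*dd^2) := ⟨_, rfl⟩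
  obtain ⟨T, hT⟩ : ∃ x : ℝ, x = P + S := ⟨_, rfl⟩
  obtain ⟨De, hDe⟩ : ∃ x : ℝ, x = P*S - ((M:ℝ)-1)*(Q*Q) := ⟨_, rfl⟩
  have hQpos : 0 < Q := by
    rw [hQ]
    have hζ0 : (0:ℝ) < ζ := by linarith
    have : 0 < aa + ζ*dd := by nlinarith [mul_nonneg hζ0.le hdnn]
    positivity
  -- key inequality
  have hkey : De < T - 1 := by
    obtain ⟨E, hEe⟩ : ∃ x : ℝ, x = (M:ℝ)*ζ*(1-R0) - (ζ-1) := ⟨_, rfl⟩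
    obtain ⟨c0, hcc⟩ : ∃ x : ℝ, x = (M:ℝ)*(1-R0) - R0*(ζ-1) := ⟨_, rfl⟩
    rw [← hEe, ← hcc] at hfar
    have hc0pos : 0 < c0 := by rw [hcc]; linarith
    have hEpos : 0 < E := by rw [hEe]; exact hE
    obtain ⟨arg, harg⟩ : ∃ x : ℝ, x = c0 / (R0 * E) := ⟨_, rfl⟩
    rw [← harg] at hfar
    have hargpos : 0 < arg := by rw [harg]; positivity
    have ht2 : arg/(M:ℝ)^2 < (φ0 - 1/(M:ℝ))^2 := by
      have habs : 0 ≤ (1/(M:ℝ))*Real.sqrt arg := by positivity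
      calc arg/(M:ℝ)^2 = ((1/(M:ℝ))*Real.sqrt arg)^2 := by
            rw [mul_pow, Real.sq_sqrt hargpos.le]; field_simp
        _ < |φ0 - 1/(M:ℝ)|^2 := by
            exact pow_lt_pow_left₀ hfar habs (by norm_num)
        _ = (φ0 - 1/(M:ℝ))^2 := sq_abs _
    have hid : T - 1 - De = R0*(M:ℝ)*E*(φ0-1/(M:ℝ))^2 - c0/(M:ℝ) := by
      rw [hT, hDe, hP, hQ, hS, haa, hdd, hEe, hcc]
      field_simp
      ring
    have h4 : 0 < R0*(M:ℝ)*E := by positivity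
    have h5 : R0*(M:ℝ)*E*(arg/(M:ℝ)^2) = c0/(M:ℝ) := by
      rw [harg]
      field_simp
    have h6 := mul_lt_mul_of_pos_left ht2 h4
    rw [h5] at h6
    linarith
  obtain ⟨disc, hdisc⟩ : ∃ x : ℝ, x = T^2 - 4*De := ⟨_, rfl⟩
  have hdiscgt : (T-2)^2 < disc := by
    rw [hdisc]
    have hexp : (T-2)^2 = T^2 - 4*T + 4 := by ring
    linarith
  have hdiscnn : 0 ≤ disc := le_trans (sq_nonneg (T-2)) (le_of_lt hdiscgt)
  obtain ⟨μ, hμ⟩ : ∃ x : ℝ, x = (T + Real.sqrt disc)/2 := ⟨_, rfl⟩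
  have hsq : Real.sqrt disc ^ 2 = disc := Real.sq_sqrt hdiscnn
  have hμ1 : 1 < μ := by
    have h1 : |T - 2| < Real.sqrt disc := by
      have h2 := Real.sqrt_lt_sqrt (sq_nonneg (T-2)) hdiscgt
      rwa [Real.sqrt_sq_eq_abs] at h2
    have h3 : 2 - T ≤ |T - 2| := by rw [abs_sub_comm]; exact le_abs_self _
    rw [hμ]; linarith
  have heigen : μ^2 - T*μ + De = 0 := by
    rw [hμ]
    linear_combination (1/4) * hsq + (1/4) * hdisc
  have hrow_out : (1/γ) * (β0 * (1-φ0) * ((1-φ0)*Q + φ0*(μ-P))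
      + ζ * β0 * φ0 * (((M:ℝ)-1)*φ0*Q + (1-((M:ℝ)-1)*φ0)*(μ-P))) = μ * Q := by
    rw [hQ, hP, haa, hdd, hR0]
    ring
  have hrow_c : (1/γ) * (ζ * β0 * (1 - ((M:ℝ)-1)*φ0) * (((M:ℝ)-1)*φ0*Q + (1-((M:ℝ)-1)*φ0)*(μ-P))
      + ((M:ℝ)-1) * (β0 * φ0 * ((1-φ0)*Q + φ0*(μ-P)))) = μ * (μ - P) := by
    have h := heigen
    rw [hT, hDe, hP, hQ, hS, haa, hdd, hR0] at h
    rw [hQ, hP, haa, hdd, hR0]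
    linear_combination (-1 : ℝ) * h
  obtain ⟨v, hv⟩ : ∃ w : Fin M → ℝ, w = fun k : Fin M =>
      if (k : ℕ) = M - 1 then μ - P else Q := ⟨_, rfl⟩
  have hmain : (ngm M (starBeta M β0 ζ) γ (starFlux M φ0)).mulVec v = μ • v := by
    funext i
    rw [hv, ngm_row M hM β0 γ ζ φ0 Q (μ - P) i]
    by_cases hiv : (i : ℕ) = M - 1
    · rw [if_pos hiv]
      simp only [Pi.smul_apply, smul_eq_mul, if_pos hiv]
      exact hrow_c
    · rw [if_neg hiv]
      simp only [Pi.smul_apply, smul_eq_mul, if_neg hiv]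
      exact hrow_out
  have hv0 : v ≠ 0 := by
    intro h
    have h5 := congrFun h ⟨0, by omega⟩
    rw [hv] at h5
    have h4 : Q = 0 := by
      simpa [show ¬((0:ℕ) = M - 1) from by omega] using h5
    exact (ne_of_gt hQpos) h4
  refine ⟨μ, ?_, hμ1⟩
  rw [spectrum.mem_iff]
  intro hu
  rw [Matrix.isUnit_iff_isUnit_det] at hu
  have hker : (algebraMap ℝ (Matrix (Fin M) (Fin M) ℝ) μ
      - ngm M (starBeta M β0 ζ) γ (starFlux M φ0)).mulVec v = 0 := by
    rw [Matrix.sub_mulVec, hmain, Algebra.algebraMap_eq_smul_one,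
      Matrix.smul_mulVec, Matrix.one_mulVec, sub_self]
  have hdet := Matrix.exists_mulVec_eq_zero_iff.1 ⟨v, hv0, hker⟩
  rw [hdet] at hu
  exact not_isUnit_zero hu
end

section
/- Let J be the symmetric 3×3 Jacobian of the unidirectional 3-cycle network, J_{ik} = Σ_{j=1}^{3} β_j φ_{ij} φ_{kj} − γ·δ_{ik}. Assume 0 < β0 < γ (so R0 = β0/γ < 1), ζ·β0 > γ, and ζ < (1/R0)·(3R0 − 4)/(R0 − 2). If φ0 ∈ (0, 1) and |φ0 − 1/2| < φ̃c, then every eigenvalue of J is negative (J is negative definite). -/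
open Matrix

/-- Flux matrix of the unidirectional 3-cycle network. -/
noncomputable def cycleFlux3 (φ0 : ℝ) : Matrix (Fin 3) (Fin 3) ℝ :=
  !![1 - φ0, φ0, 0; 0, 1 - φ0, φ0; φ0, 0, 1 - φ0]

/-- Infection rates: `β₁ = β₂ = β0`, `β₃ = ζ·β0`. -/
noncomputable def cycleBeta3 (β0 ζ : ℝ) : Fin 3 → ℝ := ![β0, β0, ζ * β0]

/-- Jacobian of the infected subsystem at the disease-free equilibrium:
`J_{ik} = Σ_j β_j φ_{ij} φ_{kj} − γ·δ_{ik}`. -/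
noncomputable def cycleJac3 (β0 ζ γ φ0 : ℝ) : Matrix (Fin 3) (Fin 3) ℝ :=
  Matrix.of fun i k =>
    (∑ j, cycleBeta3 β0 ζ j * cycleFlux3 φ0 i j * cycleFlux3 φ0 k j)
      - γ * (if i = k then 1 else 0)

set_option maxHeartbeats 2000000 in
theorem cycle3_DFE_stable (β0 γ ζ φ0 : ℝ)
    (hβ0 : 0 < β0) (hβγ : β0 < γ) (hζβ : γ < ζ * β0)
    (hζcrit : ζ < (1 / (β0 / γ)) * (3 * (β0 / γ) - 4) / ((β0 / γ) - 2))
    (hφlo : 0 < φ0) (hφhi : φ0 < 1)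
    (hnear : |φ0 - 1 / 2| <
      (1 / 2) * Real.sqrt ((ζ * (β0 / γ) * ((β0 / γ) - 2) + (4 - 3 * (β0 / γ))) /
        ((β0 / γ) * (1 + 2 * ζ - 3 * ζ * (β0 / γ))))) :
    ∀ μ ∈ spectrum ℝ (cycleJac3 β0 ζ γ φ0), μ < 0 := by
  intro μ hμ
  have hG : (0:ℝ) < γ := lt_trans hβ0 hβγ
  have hGne : γ ≠ 0 := ne_of_gt hG
  -- abbreviations
  set B := β0 with hB
  set G := γ with hGdef
  set Z := ζ with hZdef
  -- N > 0 from hζcrit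
  have hR1 : B / G < 1 := (div_lt_one hG).mpr hβγ
  have hR2 : B / G - 2 < 0 := by linarith
  have h1 : 1 / (B / G) * (3 * (B / G) - 4) < Z * (B / G - 2) :=
    (lt_div_iff_of_neg hR2).mp hζcrit
  have hR0 : 0 < B / G := div_pos hβ0 hG
  have hN : 0 < 4 * G^2 - 3 * B * G - 2 * Z * B * G + Z * B^2 := by
    have h2 : 3 * (B / G) - 4 < Z * (B / G - 2) * (B / G) := by
      have h2' := mul_lt_mul_of_pos_right h1 hR0
      rwa [one_div, inv_mul_eq_div, div_mul_cancel₀ _ (ne_of_gt hR0)] at h2'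
    have h3 := mul_lt_mul_of_pos_right h2 (pow_pos hG 2)
    have e1 : (3 * (B / G) - 4) * G^2 = 3 * B * G - 4 * G^2 := by
      field_simp
    have e2 : Z * (B / G - 2) * (B / G) * G^2 = Z * (B - 2 * G) * B := by
      field_simp
    rw [e1, e2] at h3
    nlinarith [h3]
  -- the quantity under the square root
  set S := (Z * (B / G) * ((B / G) - 2) + (4 - 3 * (B / G))) /
      ((B / G) * (1 + 2 * Z - 3 * Z * (B / G))) with hSdef
  have hSpos : 0 < S := by
    by_contra h
    push_neg at h
    have : Real.sqrt S = 0 := Real.sqrt_eq_zero'.mpr h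
    rw [this] at hnear
    have := abs_nonneg (φ0 - 1/2)
    linarith
  have hNum : 0 < Z * (B / G) * ((B / G) - 2) + (4 - 3 * (B / G)) := by
    have h2 : Z * (B / G) * ((B / G) - 2) + (4 - 3 * (B / G))
        = (4 * G^2 - 3 * B * G - 2 * Z * B * G + Z * B^2) / G^2 := by
      field_simp
      ring
    rw [h2]
    positivity
  have hDen : 0 < (B / G) * (1 + 2 * Z - 3 * Z * (B / G)) := by
    rcases lt_trichotomy ((B / G) * (1 + 2 * Z - 3 * Z * (B / G))) 0 with h | h | h
    · exfalso
      have : S < 0 := div_neg_of_pos_of_neg hNum h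
      linarith
    · exfalso
      rw [hSdef, h, div_zero] at hSpos
      exact lt_irrefl 0 hSpos
    · exact h
  have hDh : 0 < G + 2 * Z * G - 3 * Z * B := by
    have h3 : (B / G) * (1 + 2 * Z - 3 * Z * (B / G))
        = B * (G + 2 * Z * G - 3 * Z * B) / G^2 := by
      field_simp
    rw [h3] at hDen
    have h4 : 0 < B * (G + 2 * Z * G - 3 * Z * B) := by
      have := mul_pos hDen (pow_pos hG 2)
      rwa [div_mul_cancel₀] at this
      positivity
    nlinarith [h4]
  -- the key inequality from hnear
  have hsq : (φ0 - 1/2)^2 < (1/4) * S := by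
    have h5 : |φ0 - 1/2|^2 < ((1/2) * Real.sqrt S)^2 := by
      apply pow_lt_pow_left₀ hnear (abs_nonneg _)
      norm_num
    rw [sq_abs] at h5
    rw [mul_pow, Real.sq_sqrt hSpos.le] at h5
    linarith
  have hP : 0 < φ0 * (1 - φ0) * B * (G + 2 * Z * G - 3 * Z * B)
      - (G - B) * (Z * B - G) := by
    have hSD : S * ((B / G) * (1 + 2 * Z - 3 * Z * (B / G)))
        = Z * (B / G) * ((B / G) - 2) + (4 - 3 * (B / G)) :=
      div_mul_cancel₀ _ (ne_of_gt hDen)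
    have h6 : (φ0 - 1/2)^2 * ((B / G) * (1 + 2 * Z - 3 * Z * (B / G)))
        < (1/4) * (Z * (B / G) * ((B / G) - 2) + (4 - 3 * (B / G))) := by
      have h6' := mul_lt_mul_of_pos_right hsq hDen
      nlinarith [h6', hSD]
    have h7 := mul_lt_mul_of_pos_right h6 (pow_pos hG 2)
    have e1 : (φ0 - 1/2)^2 * ((B / G) * (1 + 2 * Z - 3 * Z * (B / G))) * G^2
        = (φ0 - 1/2)^2 * (B * (G + 2 * Z * G - 3 * Z * B)) := by
      field_simp
    have e2 : (1/4) * (Z * (B / G) * ((B / G) - 2) + (4 - 3 * (B / G))) * G^2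
        = (1/4) * (Z * B * (B - 2 * G) + (4 * G - 3 * B) * G) := by
      field_simp
    rw [e1, e2] at h7
    nlinarith [h7]
  -- basic positivity facts
  have hGB : 0 < G - B := by linarith
  have hZBG : 0 < Z * B - G := by linarith
  have ht : 0 < φ0 * (1 - φ0) := mul_pos hφlo (by linarith)
  have hm4 : 0 ≤ 1 - 4 * (φ0 * (1 - φ0)) := by nlinarith [sq_nonneg (1 - 2 * φ0)]
  -- coefficients of the characteristic polynomial of -J
  have hC0 : 0 < (φ0 * (1 - φ0) * B * (G + 2 * Z * G - 3 * Z * B)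
      - (G - B) * (Z * B - G)) * (3 * B * (φ0 * (1 - φ0)) + (G - B)) := by
    apply mul_pos hP
    nlinarith [mul_pos hβ0 ht]
  have hC1 : 0 < 3 * G^2 - 2 * G * B * (2 + Z) * (1 - 2 * (φ0 * (1 - φ0)))
      + B^2 * (1 + 2 * Z) * (1 - 3 * (φ0 * (1 - φ0))) * (1 - (φ0 * (1 - φ0))) := by
    nlinarith [hP, mul_pos hGB hZBG,
      mul_pos ht hN,
      mul_nonneg (mul_nonneg hGB.le hGB.le) hm4,
      mul_pos (mul_pos (mul_pos hβ0 hβ0) ht) ht,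
      mul_pos (mul_pos (mul_pos hβ0 hG) ht) ht,
      mul_pos (mul_pos (mul_pos hβ0 ht) ht) hZBG]
  have hGC2 : 0 < G * (3 * G - (2 + Z) * B * (1 - 2 * (φ0 * (1 - φ0)))) := by
    nlinarith [hN, hP, mul_pos hβ0 hDh,
      mul_pos (mul_pos hβ0 hG) ht,
      mul_pos (mul_pos hβ0 ht) hZBG]
  have hC2 : 0 < 3 * G - (2 + Z) * B * (1 - 2 * (φ0 * (1 - φ0))) := by
    rcases mul_pos_iff.mp hGC2 with h | h
    · exact h.2
    · linarith [h.1]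
  -- from the spectrum: the determinant of μ•1 - J vanishes
  have hdet : (Matrix.scalar (Fin 3) μ - cycleJac3 B Z G φ0).det = 0 := by
    by_contra h
    exact (spectrum.mem_iff.mp hμ)
      ((Matrix.isUnit_iff_isUnit_det _).mpr (isUnit_iff_ne_zero.mpr h))
  rw [Matrix.det_fin_three] at hdet
  simp only [cycleJac3, cycleFlux3, cycleBeta3, Matrix.scalar_apply, Matrix.sub_apply,
    Matrix.diagonal_apply, Matrix.of_apply, Fin.sum_univ_three,
    Matrix.cons_val', Matrix.cons_val_zero, Matrix.cons_val_one, Matrix.head_cons,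
    Matrix.empty_val', Matrix.cons_val_fin_one, Matrix.head_fin_const,
    Matrix.cons_val_two, Matrix.tail_cons] at hdet
  norm_num [Fin.ext_iff] at hdet
  ring_nf at hdet
  -- conclude: if μ ≥ 0 then the characteristic polynomial is positive
  by_contra hμ0
  push_neg at hμ0
  linarith [hdet, hC0, mul_nonneg hC1.le hμ0, mul_nonneg hC2.le (sq_nonneg μ),
    pow_nonneg hμ0 3]
end

section
/- Let J be the symmetric 3×3 Jacobian of the unidirectional 3-cycle network, J_{ik} = Σ_{j=1}^{3} β_j φ_{ij} φ_{kj} − γ·δ_{ik}. Assume 0 < β0 < γ (so R0 = β0/γ < 1), ζ·β0 > γ, and ζ < (1/R0)·(3R0 − 4)/(R0 − 2). If φ0 ∈ (0, 1) and |φ0 − 1/2| > φ̃c, then J has a positive eigenvalue. -/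
open Matrix

/-- Positivity of the determinant of the Jacobian (as a quadratic in `s = φ0(1-φ0)`). -/
lemma cycle3_quad_pos (b g z s : ℝ) (hb : 0 < b) (hbg : b < g) (hzb : g < z * b)
    (hE : 0 < g + 2*z*g - 3*z*b) (hs : 0 < s)
    (hT : z*b*(b-2*g) + (4*g-3*b)*g < b*(g+2*z*g-3*z*b) * (1-4*s)) :
    0 < -(3*b*(b*(g+2*z*g-3*z*b)))*s^2
        + (-2*b*g^2*(2+z) + 4*b^2*g*(1+2*z) - 6*z*b^3)*s
        + (b-g)^2*(z*b-g) := by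
  set Dg : ℝ := b*(g+2*z*g-3*z*b) with hD
  set Ng : ℝ := z*b*(b-2*g) + (4*g-3*b)*g with hN
  have hDg : 0 < Dg := mul_pos hb hE
  have hMpos : 0 < Dg - Ng := by nlinarith [mul_pos hDg hs]
  have hCg : 0 < (b-g)^2*(z*b-g) := by
    apply mul_pos
    · have : b - g ≠ 0 := by intro h; nlinarith
      positivity
    · linarith
  set K : ℝ := -(3*b*Dg)*(4*Dg*s + (Dg-Ng)) + 4*Dg*(-2*b*g^2*(2+z) + 4*b^2*g*(1+2*z) - 6*z*b^3) with hK
  have hident : (Dg-Ng)*K = -((3*b*Dg)*(4*Dg*s)*(Dg-Ng)) - 16*Dg^2*((b-g)^2*(z*b-g)) := by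
    rw [hK, hD, hN]; ring
  have h1 : (Dg-Ng)*K < 0 := by
    rw [hident]
    have t1 : 0 < (3*b*Dg)*(4*Dg*s)*(Dg-Ng) :=
      mul_pos (mul_pos (by positivity) (by positivity)) hMpos
    have t2 : 0 < 16*Dg^2*((b-g)^2*(z*b-g)) := by
      apply mul_pos _ hCg
      positivity
    linarith
  have hKneg : K < 0 := by
    by_contra hK0
    push_neg at hK0
    nlinarith [mul_nonneg hMpos.le hK0]
  have hTpos : 0 < Dg - Ng - 4*Dg*s := by nlinarith
  have hfinal : 16*Dg^2*(-(3*b*Dg)*s^2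
        + (-2*b*g^2*(2+z) + 4*b^2*g*(1+2*z) - 6*z*b^3)*s
        + (b-g)^2*(z*b-g)) = (Dg - Ng - 4*Dg*s)*(-K) := by
    rw [hK, hD, hN]; ring
  have hprod : 0 < (Dg - Ng - 4*Dg*s)*(-K) := mul_pos hTpos (by linarith)
  rw [← hfinal] at hprod
  have h16 : 0 < 16*Dg^2 := by positivity
  nlinarith [hprod, h16]

set_option maxHeartbeats 800000 in
/-- Explicit characteristic polynomial of the Jacobian. -/
lemma cycle3_charpoly_eq (β0 ζ γ φ0 x : ℝ) :
    Matrix.det (x • (1 : Matrix (Fin 3) (Fin 3) ℝ) - cycleJac3 β0 ζ γ φ0)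
      = x^3 + (3*γ - 2*β0 + 4*β0*φ0 - 4*β0*φ0^2 - β0*ζ + 2*β0*ζ*φ0 - 2*β0*ζ*φ0^2)*x^2
        + (3*γ^2 - 4*β0*γ + 8*β0*γ*φ0 - 8*β0*γ*φ0^2 - 2*β0*γ*ζ + 4*β0*γ*ζ*φ0
            - 4*β0*γ*ζ*φ0^2 + β0^2 - 4*β0^2*φ0 + 7*β0^2*φ0^2 - 6*β0^2*φ0^3 + 3*β0^2*φ0^4
            + 2*β0^2*ζ - 8*β0^2*ζ*φ0 + 14*β0^2*ζ*φ0^2 - 12*β0^2*ζ*φ0^3 + 6*β0^2*ζ*φ0^4)*x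
        + (-(-(3*β0*(β0*(γ+2*ζ*γ-3*ζ*β0)))*(φ0*(1-φ0))^2
            + (-2*β0*γ^2*(2+ζ) + 4*β0^2*γ*(1+2*ζ) - 6*ζ*β0^3)*(φ0*(1-φ0))
            + (β0-γ)^2*(ζ*β0-γ))) := by
  simp [cycleJac3, cycleFlux3, cycleBeta3, Matrix.det_fin_three, Fin.sum_univ_three,
    Matrix.smul_apply, Matrix.sub_apply, Matrix.one_apply]
  ring

/-- A monic cubic with negative constant term has a positive root. -/
lemma cubic_pos_root (c2 c1 c0 : ℝ) (h0 : c0 < 0) :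
    ∃ x : ℝ, 0 < x ∧ x^3 + c2*x^2 + c1*x + c0 = 0 := by
  obtain ⟨a2, ha2def⟩ : ∃ a, a = |c2| := ⟨_, rfl⟩
  obtain ⟨a1, ha1def⟩ : ∃ a, a = |c1| := ⟨_, rfl⟩
  obtain ⟨a0, ha0def⟩ : ∃ a, a = |c0| := ⟨_, rfl⟩
  have ha2 : 0 ≤ a2 := ha2def ▸ abs_nonneg c2
  have ha1 : 0 ≤ a1 := ha1def ▸ abs_nonneg c1
  have ha0 : 0 ≤ a0 := ha0def ▸ abs_nonneg c0
  have hb2 : -a2 ≤ c2 := ha2def ▸ neg_abs_le c2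
  have hb1 : -a1 ≤ c1 := ha1def ▸ neg_abs_le c1
  have hb0 : -a0 ≤ c0 := ha0def ▸ neg_abs_le c0
  set f : ℝ → ℝ := fun x => x^3 + c2*x^2 + c1*x + c0 with hf
  set M : ℝ := 1 + a2 + a1 + a0 with hM
  have hM1 : 1 ≤ M := by rw [hM]; linarith
  have hf0 : f 0 < 0 := by simp [hf]; linarith
  have hfM : 0 < f M := by
    have h2 : (-a2)*M^2 ≤ c2*M^2 := mul_le_mul_of_nonneg_right hb2 (sq_nonneg M)
    have h1' : (-a1)*M ≤ c1*M := mul_le_mul_of_nonneg_right hb1 (by linarith)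
    have key : M^3 - a2*M^2 - a1*M - a0 ≤ f M := by
      simp only [hf]
      linarith
    have key2 : 0 < M^3 - a2*M^2 - a1*M - a0 := by
      nlinarith [hM1, ha2, ha1, ha0, sq_nonneg M,
        mul_le_mul_of_nonneg_right (show a2+a1+a0 ≤ M - 1 by rw [hM]; linarith) (sq_nonneg M)]
    linarith
  have hcont : ContinuousOn f (Set.Icc 0 M) := by
    rw [hf]; fun_prop
  have hsub := intermediate_value_Ioo (show (0:ℝ) ≤ M by linarith) hcont
  obtain ⟨μ, hμmem, hμ⟩ := hsub ⟨hf0, hfM⟩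
  exact ⟨μ, hμmem.1, hμ⟩

theorem cycle3_DFE_unstable (β0 γ ζ φ0 : ℝ)
    (hβ0 : 0 < β0) (hβγ : β0 < γ) (hζβ : γ < ζ * β0)
    (hζcrit : ζ < (1 / (β0 / γ)) * (3 * (β0 / γ) - 4) / ((β0 / γ) - 2))
    (hφlo : 0 < φ0) (hφhi : φ0 < 1)
    (hfar : (1 / 2) * Real.sqrt ((ζ * (β0 / γ) * ((β0 / γ) - 2) + (4 - 3 * (β0 / γ))) /
        ((β0 / γ) * (1 + 2 * ζ - 3 * ζ * (β0 / γ))))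
      < |φ0 - 1 / 2|) :
    ∃ μ ∈ spectrum ℝ (cycleJac3 β0 ζ γ φ0), 0 < μ := by
  have hγ : 0 < γ := hβ0.trans hβγ
  have hζ : 0 < ζ := by nlinarith
  have hr0 : 0 < β0/γ := div_pos hβ0 hγ
  have hr1 : β0/γ < 1 := (div_lt_one hγ).mpr hβγ
  have hr2 : β0/γ - 2 < 0 := by linarith
  have h1 : (1/(β0/γ)) * (3*(β0/γ) - 4) < ζ * ((β0/γ) - 2) :=
    (lt_div_iff_of_neg hr2).mp hζcrit
  have h3 : 3*(β0/γ) - 4 < ζ*(β0/γ)*((β0/γ)-2) := by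
    have h2 := mul_lt_mul_of_pos_left h1 hr0
    calc 3*(β0/γ) - 4 = (β0/γ)*((1/(β0/γ))*(3*(β0/γ)-4)) := by
          field_simp
      _ < (β0/γ)*(ζ*((β0/γ)-2)) := h2
      _ = ζ*(β0/γ)*((β0/γ)-2) := by ring
  have hNg : 0 < ζ*β0*(β0-2*γ) + (4*γ-3*β0)*γ := by
    have h4 := mul_lt_mul_of_pos_left h3 (show (0:ℝ) < γ^2 by positivity)
    have e1 : γ^2*(3*(β0/γ) - 4) = 3*β0*γ - 4*γ^2 := by field_simp
    have e2 : γ^2*(ζ*(β0/γ)*((β0/γ)-2)) = ζ*β0*(β0-2*γ) := by field_simp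
    rw [e1, e2] at h4
    linarith
  have hE : 0 < γ + 2*ζ*γ - 3*ζ*β0 := by
    rcases le_or_gt (3*β0) (2*γ) with h | h
    · nlinarith [mul_nonneg hζ.le (show (0:ℝ) ≤ 2*γ - 3*β0 by linarith)]
    · by_contra hE0
      push_neg at hE0
      nlinarith [mul_nonneg (show (0:ℝ) ≤ -(γ + 2*ζ*γ - 3*ζ*β0) by linarith)
          (show (0:ℝ) ≤ β0*(2*γ-β0) by nlinarith),
        mul_pos hNg (show (0:ℝ) < 3*β0 - 2*γ by linarith),
        mul_pos hγ (show (0:ℝ) < (β0-γ)^2 by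
          have : β0 - γ ≠ 0 := by intro hh; nlinarith
          positivity)]
  have hden : 0 < (β0/γ) * (1 + 2*ζ - 3*ζ*(β0/γ)) := by
    apply mul_pos hr0
    have e : 1 + 2*ζ - 3*ζ*(β0/γ) = (γ + 2*ζ*γ - 3*ζ*β0)/γ := by field_simp
    rw [e]; exact div_pos hE hγ
  have hnum : 0 < ζ*(β0/γ)*((β0/γ)-2) + (4 - 3*(β0/γ)) := by linarith
  have hQpos : 0 < (ζ * (β0 / γ) * ((β0 / γ) - 2) + (4 - 3 * (β0 / γ))) /
        ((β0 / γ) * (1 + 2 * ζ - 3 * ζ * (β0 / γ))) := by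
    apply div_pos _ hden
    linarith
  have hsq : (ζ * (β0 / γ) * ((β0 / γ) - 2) + (4 - 3 * (β0 / γ))) /
        ((β0 / γ) * (1 + 2 * ζ - 3 * ζ * (β0 / γ))) < 1 - 4*(φ0*(1-φ0)) := by
    have h := mul_self_lt_mul_self (by positivity) hfar
    rw [abs_mul_abs_self] at h
    rw [show ∀ q : ℝ, (1/2*Real.sqrt q)*(1/2*Real.sqrt q) = (Real.sqrt q * Real.sqrt q)/4
        from fun q => by ring] at h
    rw [Real.mul_self_sqrt hQpos.le] at h
    nlinarith [h]
  have hT : ζ*β0*(β0-2*γ) + (4*γ-3*β0)*γ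
      < β0*(γ+2*ζ*γ-3*ζ*β0) * (1-4*(φ0*(1-φ0))) := by
    have h5 := (div_lt_iff₀ hden).mp hsq
    have h6 := mul_lt_mul_of_pos_left h5 (show (0:ℝ) < γ^2 by positivity)
    have e1 : γ^2*(ζ*(β0/γ)*((β0/γ)-2) + (4-3*(β0/γ)))
        = ζ*β0*(β0-2*γ) + (4*γ-3*β0)*γ := by field_simp
    have e2 : γ^2*((1-4*(φ0*(1-φ0)))*((β0/γ)*(1+2*ζ-3*ζ*(β0/γ))))
        = β0*(γ+2*ζ*γ-3*ζ*β0) * (1-4*(φ0*(1-φ0))) := by field_simp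
    rw [e1, e2] at h6
    linarith
  have hs : 0 < φ0*(1-φ0) := mul_pos hφlo (by linarith)
  have hquad := cycle3_quad_pos β0 γ ζ (φ0*(1-φ0)) hβ0 hβγ hζβ hE hs hT
  have hc0 : (-(-(3*β0*(β0*(γ+2*ζ*γ-3*ζ*β0)))*(φ0*(1-φ0))^2
            + (-2*β0*γ^2*(2+ζ) + 4*β0^2*γ*(1+2*ζ) - 6*ζ*β0^3)*(φ0*(1-φ0))
            + (β0-γ)^2*(ζ*β0-γ))) < 0 := by linarith
  obtain ⟨μ, hμpos, hμroot⟩ := cubic_pos_root _ _ _ hc0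
  refine ⟨μ, ?_, hμpos⟩
  rw [spectrum.mem_iff]
  intro hunit
  rw [Matrix.isUnit_iff_isUnit_det] at hunit
  rw [show (algebraMap ℝ (Matrix (Fin 3) (Fin 3) ℝ)) μ = μ • (1 : Matrix (Fin 3) (Fin 3) ℝ) from
    Algebra.algebraMap_eq_smul_one μ] at hunit
  rw [cycle3_charpoly_eq β0 ζ γ φ0 μ, hμroot] at hunit
  exact not_isUnit_zero hunit
end

section
/- Let M ≥ 3 be odd and let p, q, c0, c1, c2 be real numbers. Let A be the M×M real symmetric matrix with A_{uu} = p + c0 for u < M; A_{2i−1, 2i} = A_{2i, 2i−1} = p + c2 for 1 ≤ i ≤ (M−1)/2; A_{uv} = p for all other pairs u ≠ v with u, v < M; A_{uM} = A_{Mu} = q for u < M; and A_{MM} = p + c1. Then the characteristic polynomial of A factors as det(X·I − A) = (X − (c0 + c2))^{(M−3)/2} · (X − (c0 − c2))^{(M−1)/2} · (X² − (c0 + c1 + c2 + pM)·X + (c0·c1 + c1·c2 + c0·p + (M−1)·c1·p + c2·p + (M−1)·(p² − q²))). -/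
/-!
Write `M = 2K + 1` and list the indices as `(Fin 2 × Fin K) ⊕ Fin 1`: the `K` pairs, then the
last node. In these coordinates `x • 1 - A` has a corner `x - (p + c1)`, a constant border `-q`,
and a top-left block `N - p • J`, where `N` is block diagonal with `K` copies of
`!![x - c0, -c2; -c2, x - c0]` and `J` is the all-ones matrix. When `x ≠ p + c1`, the Schur
complement of the corner is `N - (p + q² / (x - (p + c1))) • J`, a rank-one perturbation of `N`.
Since `N` has constant row sums `x - (c0 + c2)`, the vector of ones is an eigenvector, and the
matrix determinant lemma gives its determinant without inverting `N`. Both sides of the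
identity are then polynomials agreeing at all but two values of `x`.
-/

open Matrix Polynomial

/-- The structure of the next generation matrix of the star-triangle network
with one heterogeneous node: the first `M−1` (0-based: `0,…,M−2`) indices are
grouped into disjoint pairs `(2i−1, 2i)` (0-based: `u/2 = v/2`); pairs carry
off-diagonal entry `p + c2`, other off-diagonal entries among the first
`M−1` indices equal `p`, the last row/column carry `q`, and the diagonal is
`(p+c0, …, p+c0, p+c1)`. -/
noncomputable def starTriangleShape (M : ℕ) (p q c0 c1 c2 : ℝ) :
    Matrix (Fin M) (Fin M) ℝ :=
  Matrix.of fun u v =>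
    if u = v then (if (u : ℕ) = M - 1 then p + c1 else p + c0)
    else if (u : ℕ) = M - 1 ∨ (v : ℕ) = M - 1 then q
    else if (u : ℕ) / 2 = (v : ℕ) / 2 then p + c2 else p

namespace Matrix

variable {n m ι 𝕜 : Type*} [Fintype n] [DecidableEq n] [Fintype ι] [Unique ι] [Field 𝕜]

theorem det_add_replicateCol_mul_replicateRow_of_mulVec_eq_smul {N : Matrix n n 𝕜}
    {u : n → 𝕜} {s : 𝕜} (hs : s ≠ 0) (hN : N *ᵥ u = s • u) (v : n → 𝕜) :
    (N + replicateCol ι u * replicateRow ι v).det = N.det * (1 + v ⬝ᵥ u / s) := by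
  have hfactor : N + replicateCol ι u * replicateRow ι v
      = N * (1 + replicateCol ι (s⁻¹ • u) * replicateRow ι v) := by
    rw [Matrix.mul_add, Matrix.mul_one, ← Matrix.mul_assoc, ← replicateCol_mulVec,
      mulVec_smul, hN, inv_smul_smul₀ hs]
  rw [hfactor, det_mul, det_one_add_mul_comm,
    det_unique (1 + replicateRow ι v * replicateCol ι (s⁻¹ • u)), Matrix.add_apply, one_apply_eq,
    replicateRow_mul_replicateCol_apply, dotProduct_smul, smul_eq_mul, inv_mul_eq_div]

variable [Fintype m] [DecidableEq m] [DecidableEq ι]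

theorem det_fromBlocks_replicateCol_replicateRow_scalar (A : Matrix m m 𝕜) (b c : m → 𝕜)
    {d : 𝕜} (hd : d ≠ 0) :
    (fromBlocks A (replicateCol ι b) (replicateRow ι c) (scalar ι d)).det
      = d * (A - replicateCol ι (d⁻¹ • b) * replicateRow ι c).det := by
  have hinv : scalar ι d * scalar ι d⁻¹ = 1 := by rw [← map_mul, mul_inv_cancel₀ hd, map_one]
  let := invertibleOfRightInverse _ _ hinv
  have hcol : replicateCol ι b * ⅟(scalar ι d) = replicateCol ι (d⁻¹ • b) := by
    rw [invOf_eq_right_inv hinv]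
    ext i j
    simp [mul_comm]
  rw [det_fromBlocks₂₂, hcol, det_unique]
  simp

end Matrix

namespace Matrix

variable {ι R : Type*} [Fintype ι] [DecidableEq ι] [CommRing R]

theorem blockDiagonal_fin_two_mulVec_const (a b c : R) :
    blockDiagonal (fun _ : ι => !![a, b; b, a]) *ᵥ (fun _ => c) = (a + b) • fun _ => c := by
  ext ⟨i, k⟩
  simp only [mulVec, dotProduct, blockDiagonal_apply, of_apply, ite_mul, zero_mul,
    Fintype.sum_prod_type, Finset.sum_ite_eq, Finset.mem_univ, if_true, Fin.sum_univ_two,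
    Pi.smul_apply, smul_eq_mul]
  fin_cases i <;> simp only [Fin.zero_eta, Fin.mk_one, Fin.isValue, cons_val', cons_val_zero,
    cons_val_one, cons_val_fin_one] <;> ring

theorem det_blockDiagonal_fin_two (a b : R) :
    (blockDiagonal fun _ : ι => !![a, b; b, a]).det = ((a + b) * (a - b)) ^ Fintype.card ι := by
  rw [det_blockDiagonal, det_fin_two_of, Finset.prod_const, Finset.card_univ]
  ring

end Matrix

def starTriangleIndex (K : ℕ) : (Fin 2 × Fin K) ⊕ Fin 1 ≃ Fin (K * 2 + 1) :=
  (((Equiv.prodComm _ _).trans finProdFinEquiv).sumCongr (Equiv.refl _)).trans finSumFinEquiv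

@[simp]
theorem starTriangleIndex_inl_val (K : ℕ) (a : Fin 2) (k : Fin K) :
    (starTriangleIndex K (.inl (a, k)) : ℕ) = a + 2 * k := by
  simp [starTriangleIndex, finProdFinEquiv_apply_val]

@[simp]
theorem starTriangleIndex_inr_val (K : ℕ) (i : Fin 1) :
    (starTriangleIndex K (.inr i) : ℕ) = K * 2 := by
  simp [starTriangleIndex, Fin.natAdd, Subsingleton.elim i 0]

theorem scalar_sub_starTriangleShape_submatrix (K : ℕ) (x p q c0 c1 c2 : ℝ) :
    (scalar _ x - starTriangleShape (K * 2 + 1) p q c0 c1 c2).submatrix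
        (starTriangleIndex K) (starTriangleIndex K)
      = fromBlocks
          (blockDiagonal (fun _ : Fin K => !![x - c0, -c2; -c2, x - c0])
            + replicateCol (Fin 1) (fun _ : Fin 2 × Fin K => -p)
              * replicateRow (Fin 1) (fun _ => (1 : ℝ)))
          (replicateCol (Fin 1) fun _ => -q) (replicateRow (Fin 1) fun _ => -q)
          (scalar (Fin 1) (x - (p + c1))) := by
  ext (⟨a, k⟩ | i) (⟨b, l⟩ | j)
  all_goals
    simp only [submatrix_apply, fromBlocks_apply₁₁, fromBlocks_apply₁₂, fromBlocks_apply₂₁,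
      fromBlocks_apply₂₂, Matrix.sub_apply, Matrix.add_apply, scalar_apply, diagonal_apply,
      starTriangleShape, of_apply, blockDiagonal_apply, replicateCol_apply, replicateRow_apply,
      mul_apply, Finset.univ_unique, Finset.sum_singleton, Fin.ext_iff,
      starTriangleIndex_inl_val, starTriangleIndex_inr_val]
  · have hk := k.isLt; have hl := l.isLt
    fin_cases a <;> fin_cases b <;>
      simp only [Fin.zero_eta, Fin.mk_one, Fin.isValue, cons_val',
        cons_val_zero, cons_val_one, cons_val_fin_one, mul_one] <;>
      split_ifs <;> first | ring1 | omega
  · have hk := k.isLt; have ha := a.isLt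
    split_ifs <;> first | ring1 | omega
  · have hl := l.isLt; have hb := b.isLt
    split_ifs <;> first | ring1 | omega
  · simp [Subsingleton.elim i j]

theorem det_scalar_sub_starTriangleShape (K : ℕ) {x p q c0 c1 c2 : ℝ}
    (hd : x - (p + c1) ≠ 0) (hs : x - (c0 + c2) ≠ 0) :
    (scalar _ x - starTriangleShape (K * 2 + 1) p q c0 c1 c2).det
      = (x - (p + c1)) * ((x - (c0 + c2)) * (x - (c0 - c2))) ^ K
          * (1 - 2 * K * (p + q ^ 2 / (x - (p + c1))) / (x - (c0 + c2))) := by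
  have hschur : blockDiagonal (fun _ : Fin K => !![x - c0, -c2; -c2, x - c0])
        + replicateCol (Fin 1) (fun _ => -p) * replicateRow (Fin 1) (fun _ => (1 : ℝ))
        - replicateCol (Fin 1) ((x - (p + c1))⁻¹ • fun _ => -q)
          * replicateRow (Fin 1) (fun _ => -q)
      = blockDiagonal (fun _ : Fin K => !![x - c0, -c2; -c2, x - c0])
        + replicateCol (Fin 1) (fun _ => -(p + q ^ 2 / (x - (p + c1))))
          * replicateRow (Fin 1) (fun _ => (1 : ℝ)) := by
    ext i j
    simp only [Matrix.sub_apply, Matrix.add_apply, mul_apply, replicateCol_apply,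
      replicateRow_apply, Pi.smul_apply, smul_eq_mul, Finset.univ_unique, Finset.sum_singleton]
    ring
  have hrowSum : x - c0 + -c2 ≠ 0 := by rwa [← sub_eq_add_neg, sub_sub]
  rw [← det_submatrix_equiv_self (starTriangleIndex K), scalar_sub_starTriangleShape_submatrix,
    det_fromBlocks_replicateCol_replicateRow_scalar _ _ _ hd, hschur,
    det_add_replicateCol_mul_replicateRow_of_mulVec_eq_smul hrowSum
      (blockDiagonal_fin_two_mulVec_const _ _ _), det_blockDiagonal_fin_two]
  simp only [dotProduct, Finset.sum_const, Finset.card_univ, Fintype.card_prod, Fintype.card_fin,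
    nsmul_eq_mul, Nat.cast_mul, Nat.cast_ofNat]
  ring

theorem starTriangleShape_charpoly (M : ℕ) (hM : 3 ≤ M) (hModd : Odd M)
    (p q c0 c1 c2 : ℝ) :
    (starTriangleShape M p q c0 c1 c2).charpoly
      = (X - C (c0 + c2)) ^ ((M - 3) / 2) *
        (X - C (c0 - c2)) ^ ((M - 1) / 2) *
        (X ^ 2 - C (c0 + c1 + c2 + p * (M : ℝ)) * X
          + C (c0 * c1 + c1 * c2 + c0 * p + ((M : ℝ) - 1) * c1 * p + c2 * p
              + ((M : ℝ) - 1) * (p ^ 2 - q ^ 2))) := by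
  obtain ⟨K, rfl⟩ : ∃ K, M = (K + 1) * 2 + 1 := by
    obtain ⟨k, rfl⟩ := hModd
    exact ⟨k - 1, by omega⟩
  refine eq_of_infinite_eval_eq _ _ ((Set.toFinite {p + c1, c0 + c2}).infinite_compl.mono ?_)
  intro x hx
  simp only [Set.mem_compl_iff, Set.mem_insert_iff, Set.mem_singleton_iff, not_or] at hx
  have hd : x - (p + c1) ≠ 0 := sub_ne_zero.mpr hx.1
  have hs : x - (c0 + c2) ≠ 0 := sub_ne_zero.mpr hx.2
  rw [Set.mem_ofPred_eq, eval_charpoly, det_scalar_sub_starTriangleShape _ hd hs]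
  have hsub3 : ((K + 1) * 2 + 1 - 3) / 2 = K := by omega
  have hsub1 : ((K + 1) * 2 + 1 - 1) / 2 = K + 1 := by omega
  simp only [eval_mul, eval_pow, eval_sub, eval_add, eval_X, eval_C, hsub3, hsub1]
  field_simp
  push_cast
  rw [mul_pow]
  ring
end

section
/- For the fully connected network with M ≥ 3 nodes and one heterogeneous node, let κ be the next generation matrix, κ_{ik} = (1/γ)·Σ_{j=1}^{M} β_j φ_{ij} φ_{kj}, and assume 0 < β0 < γ (so R0 = β0/γ < 1). (i) If γ/β0 < ζ < ζcrit and |φ0 − 1/M| < φ̃ with φ0 ∈ (0, 1/(M−1)], then every eigenvalue of κ has absolute value strictly less than 1; if instead |φ0 − 1/M| > φ̃ with φ0 ∈ (0, 1/(M−1)], then κ has a real eigenvalue strictly greater than 1. (ii) If ζ·β0 < γ, then for every φ0 ∈ (0, 1/(M−1)] all eigenvalues of κ have absolute value strictly less than 1. -/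
open Matrix

/-- Flux matrix of the fully connected network with `M` nodes:
`φ_{ij} = φ0` for `i ≠ j`, `φ_{ii} = 1 − (M−1)φ0`. -/
noncomputable def fcFlux (M : ℕ) (φ0 : ℝ) : Matrix (Fin M) (Fin M) ℝ :=
  Matrix.of fun i k => if i = k then 1 - ((M : ℝ) - 1) * φ0 else φ0

namespace FCaux
variable {M : ℕ}

noncomputable def ind (x y : Fin M) : ℝ := if x = y then 1 else 0

lemma ind_comm (x y : Fin M) : ind x y = ind y x := by
  unfold ind
  rcases eq_or_ne x y with h | h
  · simp [h]
  · simp [h, h.symm]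

lemma sum_ind_mul (x : Fin M) (f : Fin M → ℝ) : ∑ j, ind x j * f j = f x := by
  simp [ind, ite_mul]

lemma sum_ind (x : Fin M) : ∑ j, ind x j = 1 := by
  simp [ind]

lemma mem_spectrum_iff (A : Matrix (Fin M) (Fin M) ℝ) (μ : ℝ) :
    μ ∈ spectrum ℝ A ↔ ∃ v, v ≠ 0 ∧ A.mulVec v = μ • v := by
  rw [spectrum.mem_iff]
  have halg : (algebraMap ℝ (Matrix (Fin M) (Fin M) ℝ)) μ = μ • (1 : Matrix (Fin M) (Fin M) ℝ) := by
    rw [Algebra.algebraMap_eq_smul_one]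
  rw [halg, Matrix.isUnit_iff_isUnit_det, isUnit_iff_ne_zero, not_not,
    ← Matrix.exists_mulVec_eq_zero_iff]
  constructor
  · rintro ⟨v, hv, h⟩
    refine ⟨v, hv, ?_⟩
    rw [Matrix.sub_mulVec, Matrix.smul_mulVec, Matrix.one_mulVec, sub_eq_zero] at h
    exact h.symm
  · rintro ⟨v, hv, h⟩
    refine ⟨v, hv, ?_⟩
    rw [Matrix.sub_mulVec, Matrix.smul_mulVec, Matrix.one_mulVec, h, sub_self]

lemma starBeta_eq (L : Fin M) (hL : (L : ℕ) = M - 1) (β0 ζ : ℝ) (j : Fin M) :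
    starBeta M β0 ζ j = β0 + (ζ - 1) * β0 * ind L j := by
  unfold starBeta ind
  rcases eq_or_ne L j with h | h
  · subst h; simp [hL]; ring
  · have : (j : ℕ) ≠ M - 1 := by
      intro hc
      exact h (Fin.ext (by omega))
    simp [this, h]

lemma fcFlux_eq (φ0 : ℝ) (x j : Fin M) :
    fcFlux M φ0 x j = φ0 + (1 - (M : ℝ) * φ0) * ind x j := by
  unfold fcFlux ind
  rcases eq_or_ne x j with h | h
  · simp [h]; ring
  · simp [h]

lemma ngm_apply (hM : 3 ≤ M) (L : Fin M) (hL : (L : ℕ) = M - 1) (β0 γ ζ φ0 : ℝ) (i k : Fin M) :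
    ngm M (starBeta M β0 ζ) γ (fcFlux M φ0) i k =
      (β0 / γ) * ((1 - (M : ℝ) * φ0) ^ 2 * ind i k + φ0 * (2 - (M : ℝ) * φ0)
        + (ζ - 1) * ((φ0 + (1 - (M : ℝ) * φ0) * ind L i)
            * (φ0 + (1 - (M : ℝ) * φ0) * ind L k))) := by
  unfold ngm
  simp only [Matrix.of_apply]
  have key : ∀ j, starBeta M β0 ζ j * fcFlux M φ0 i j * fcFlux M φ0 k j
      = (β0 * φ0 * φ0)
        + (β0 * φ0 * (1 - (M : ℝ) * φ0)) * ind i j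
        + (β0 * φ0 * (1 - (M : ℝ) * φ0)) * ind k j
        + (β0 * (1 - (M : ℝ) * φ0) * (1 - (M : ℝ) * φ0)) * (ind i j * ind k j)
        + ((ζ - 1) * β0 * φ0 * φ0) * ind L j
        + ((ζ - 1) * β0 * φ0 * (1 - (M : ℝ) * φ0)) * (ind L j * ind i j)
        + ((ζ - 1) * β0 * φ0 * (1 - (M : ℝ) * φ0)) * (ind L j * ind k j)
        + ((ζ - 1) * β0 * (1 - (M : ℝ) * φ0) * (1 - (M : ℝ) * φ0))
            * (ind L j * (ind i j * ind k j)) := by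
    intro j
    rw [starBeta_eq L hL, fcFlux_eq, fcFlux_eq]
    ring
  rw [Finset.sum_congr rfl fun j _ => key j]
  simp only [Finset.sum_add_distrib, ← Finset.mul_sum, sum_ind_mul, sum_ind,
    Finset.sum_const, Finset.card_univ, Fintype.card_fin, nsmul_eq_mul]
  rw [ind_comm k i, ind_comm i L, ind_comm k L]
  ring

lemma ngm_mulVec (hM : 3 ≤ M) (L : Fin M) (hL : (L : ℕ) = M - 1) (β0 γ ζ φ0 : ℝ)
    (v : Fin M → ℝ) (i : Fin M) :
    (ngm M (starBeta M β0 ζ) γ (fcFlux M φ0)).mulVec v i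
      = (β0 / γ) * (1 - (M : ℝ) * φ0) ^ 2 * v i
        + (β0 / γ) * (φ0 * (2 - (M : ℝ) * φ0)) * (∑ k, v k)
        + (β0 / γ) * (ζ - 1) * (φ0 + (1 - (M : ℝ) * φ0) * ind L i)
            * (∑ k, (φ0 + (1 - (M : ℝ) * φ0) * ind L k) * v k) := by
  rw [Matrix.mulVec, dotProduct]
  have key : ∀ k, ngm M (starBeta M β0 ζ) γ (fcFlux M φ0) i k * v k
      = ((β0 / γ) * (1 - (M : ℝ) * φ0) ^ 2) * (ind i k * v k)
        + ((β0 / γ) * (φ0 * (2 - (M : ℝ) * φ0))) * v k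
        + ((β0 / γ) * (ζ - 1) * (φ0 + (1 - (M : ℝ) * φ0) * ind L i))
            * ((φ0 + (1 - (M : ℝ) * φ0) * ind L k) * v k) := by
    intro k
    rw [ngm_apply hM L hL]
    ring
  rw [Finset.sum_congr rfl fun k _ => key k]
  simp only [Finset.sum_add_distrib, ← Finset.mul_sum, sum_ind_mul]

lemma eigen_cases (hM : 3 ≤ M) {β0 γ ζ φ0 μ : ℝ}
    (hμ : μ ∈ spectrum ℝ (ngm M (starBeta M β0 ζ) γ (fcFlux M φ0))) :
    μ = (β0 / γ) * (1 - (M : ℝ) * φ0) ^ 2 ∨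
      μ ^ 2 - ((β0 / γ) * (1 + (1 - (M : ℝ) * φ0) ^ 2)
          + (β0 / γ) * (ζ - 1) * (φ0 * (2 - (M : ℝ) * φ0) + (1 - (M : ℝ) * φ0) ^ 2)) * μ
        + ζ * (β0 / γ) ^ 2 * (1 - (M : ℝ) * φ0) ^ 2 = 0 := by
  set L : Fin M := ⟨M - 1, by omega⟩ with hLdef
  have hL : (L : ℕ) = M - 1 := rfl
  set i0 : Fin M := ⟨0, by omega⟩ with hi0def
  have hne : L ≠ i0 := by
    intro h
    have := congrArg Fin.val h
    simp [hLdef, hi0def] at this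
    omega
  obtain ⟨v, hv0, hv⟩ := (mem_spectrum_iff _ μ).mp hμ
  set R := β0 / γ with hRdef
  set m := (M : ℝ) with hmdef
  have hrow : ∀ i, R * (1 - m * φ0) ^ 2 * v i
      + R * (φ0 * (2 - m * φ0)) * (∑ k, v k)
      + R * (ζ - 1) * (φ0 + (1 - m * φ0) * ind L i)
          * (∑ k, (φ0 + (1 - m * φ0) * ind L k) * v k) = μ * v i := by
    intro i
    have h := congrFun hv i
    rw [ngm_mulVec hM L hL] at h
    simpa using h
  by_cases hc : μ = R * (1 - m * φ0) ^ 2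
  · exact Or.inl hc
  right
  have hLi0 : ind L i0 = 0 := by unfold ind; rw [if_neg hne]
  have hLL : ind L L = 1 := by unfold ind; rw [if_pos rfl]
  have hvv : ∀ i, i ≠ L → v i = v i0 := by
    intro i hi
    have hLi : ind L i = 0 := by unfold ind; rw [if_neg (Ne.symm hi)]
    have h1 := hrow i
    have h2 := hrow i0
    rw [hLi] at h1
    rw [hLi0] at h2
    have h3 : (μ - R * (1 - m * φ0) ^ 2) * (v i - v i0) = 0 := by
      linear_combination h2 - h1
    rcases mul_eq_zero.mp h3 with h | h
    · exact absurd (by linarith : μ = R * (1 - m * φ0) ^ 2) hc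
    · linarith
  have hS : (∑ k, v k) = m * v i0 + (v L - v i0) := by
    have hpt : ∀ k, v k = v i0 + (v L - v i0) * ind L k := by
      intro k
      rcases eq_or_ne k L with h | h
      · subst h; rw [hLL]; ring
      · have h0 : ind L k = 0 := by unfold ind; rw [if_neg (Ne.symm h)]
        rw [hvv k h, h0]; ring
    rw [Finset.sum_congr rfl fun k _ => hpt k]
    simp only [Finset.sum_add_distrib, ← Finset.mul_sum, sum_ind, Finset.sum_const,
      Finset.card_univ, Fintype.card_fin, nsmul_eq_mul]
    ring
  have hW : (∑ k, (φ0 + (1 - m * φ0) * ind L k) * v k)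
      = φ0 * (m * v i0 + (v L - v i0)) + (1 - m * φ0) * v L := by
    have hpt : ∀ k, (φ0 + (1 - m * φ0) * ind L k) * v k
        = φ0 * v k + ((1 - m * φ0) * v L) * ind L k := by
      intro k
      rcases eq_or_ne k L with h | h
      · subst h; rw [hLL]; ring
      · have h0 : ind L k = 0 := by unfold ind; rw [if_neg (Ne.symm h)]
        rw [h0]; ring
    rw [Finset.sum_congr rfl fun k _ => hpt k]
    rw [Finset.sum_add_distrib, ← Finset.mul_sum, ← Finset.mul_sum, hS, sum_ind]
    ring
  have e1 := hrow i0
  rw [hLi0, hS, hW] at e1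
  have e2 := hrow L
  rw [hLL, hS, hW] at e2
  have hpr : v i0 ≠ 0 ∨ v L ≠ 0 := by
    by_contra hcon
    push_neg at hcon
    apply hv0
    funext i
    rcases eq_or_ne i L with h | h
    · rw [h]; exact hcon.2
    · rw [hvv i h]; exact hcon.1
  rcases hpr with hp | hr
  · have key : (μ ^ 2 - (R * (1 + (1 - m * φ0) ^ 2)
        + R * (ζ - 1) * (φ0 * (2 - m * φ0) + (1 - m * φ0) ^ 2)) * μ
        + ζ * R ^ 2 * (1 - m * φ0) ^ 2) * v i0 = 0 := by
      linear_combination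
        (R * (1 - m * φ0) ^ 2 + R * (φ0 * (2 - m * φ0))
          + R * (ζ - 1) * (φ0 + (1 - m * φ0)) ^ 2 - μ) * e1
        + (-(R * (φ0 * (2 - m * φ0)) + R * (ζ - 1) * (φ0 * (φ0 + (1 - m * φ0))))) * e2
    exact (mul_eq_zero.mp key).resolve_right hp
  · have key : (μ ^ 2 - (R * (1 + (1 - m * φ0) ^ 2)
        + R * (ζ - 1) * (φ0 * (2 - m * φ0) + (1 - m * φ0) ^ 2)) * μ
        + ζ * R ^ 2 * (1 - m * φ0) ^ 2) * v L = 0 := by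
      linear_combination
        (-((R * (φ0 * (2 - m * φ0)) + R * (ζ - 1) * (φ0 * (φ0 + (1 - m * φ0)))) * (m - 1))) * e1
        + (R * (1 - m * φ0) ^ 2 + (R * (φ0 * (2 - m * φ0))
            + R * (ζ - 1) * φ0 ^ 2) * (m - 1) - μ) * e2
    exact (mul_eq_zero.mp key).resolve_right hr

lemma eigen_exists (hM : 3 ≤ M) {β0 γ ζ φ0 μ : ℝ}
    (hroot : μ ^ 2 - ((β0 / γ) * (1 + (1 - (M : ℝ) * φ0) ^ 2)
          + (β0 / γ) * (ζ - 1) * (φ0 * (2 - (M : ℝ) * φ0) + (1 - (M : ℝ) * φ0) ^ 2)) * μ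
        + ζ * (β0 / γ) ^ 2 * (1 - (M : ℝ) * φ0) ^ 2 = 0) :
    μ ∈ spectrum ℝ (ngm M (starBeta M β0 ζ) γ (fcFlux M φ0)) := by
  set L : Fin M := ⟨M - 1, by omega⟩ with hLdef
  have hL : (L : ℕ) = M - 1 := rfl
  set i0 : Fin M := ⟨0, by omega⟩ with hi0def
  have hne : L ≠ i0 := by
    intro h
    have := congrArg Fin.val h
    simp [hLdef, hi0def] at this
    omega
  set R := β0 / γ with hRdef
  set m := (M : ℝ) with hmdef
  set c : ℝ := R * (φ0 * (2 - m * φ0)) with hcdef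
  set d : ℝ := R * (ζ - 1) with hddef
  set B11 : ℝ := R * (1 - m * φ0) ^ 2 + (c + d * φ0 ^ 2) * (m - 1) with hB11
  set B12 : ℝ := c + d * (φ0 * (φ0 + (1 - m * φ0))) with hB12
  set B21 : ℝ := B12 * (m - 1) with hB21
  set B22 : ℝ := R * (1 - m * φ0) ^ 2 + c + d * (φ0 + (1 - m * φ0)) ^ 2 with hB22
  obtain ⟨p, r, hpr, e1, e2⟩ : ∃ p r : ℝ, ¬(p = 0 ∧ r = 0) ∧
      μ * p = B11 * p + B12 * r ∧ μ * r = B21 * p + B22 * r := by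
    by_cases h1 : μ - B22 = 0 ∧ B21 = 0
    · by_cases h2 : B12 = 0 ∧ μ - B11 = 0
      · refine ⟨1, 0, by simp, ?_, ?_⟩
        · rw [h2.1]; have : μ = B11 := by linarith [h2.2]
          rw [this]; ring
        · rw [h1.2]; ring
      · refine ⟨B12, μ - B11, fun h => h2 ⟨h.1, h.2⟩, by ring, ?_⟩
        simp only [hB21, hB11, hB12, hB22, hcdef, hddef] at hroot ⊢
        linear_combination hroot
    · refine ⟨μ - B22, B21, fun h => h1 ⟨h.1, h.2⟩, ?_, by ring⟩
      simp only [hB21, hB11, hB12, hB22, hcdef, hddef] at hroot ⊢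
      linear_combination hroot
  set v : Fin M → ℝ := fun i => p + (r - p) * ind L i with hvdef
  have hvi0 : v i0 = p := by
    simp only [hvdef]
    have h0 : ind L i0 = 0 := by unfold ind; rw [if_neg hne]
    rw [h0]; ring
  have hvL : v L = r := by
    simp only [hvdef]
    have h1 : ind L L = 1 := by unfold ind; rw [if_pos rfl]
    rw [h1]; ring
  have hv0 : v ≠ 0 := by
    intro h
    apply hpr
    constructor
    · rw [← hvi0, h]; rfl
    · rw [← hvL, h]; rfl
  apply (mem_spectrum_iff _ μ).mpr
  refine ⟨v, hv0, ?_⟩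
  have hS : (∑ k, v k) = m * p + (r - p) := by
    simp only [hvdef]
    simp only [Finset.sum_add_distrib, ← Finset.mul_sum, sum_ind, Finset.sum_const,
      Finset.card_univ, Fintype.card_fin, nsmul_eq_mul]
    ring
  have hW : (∑ k, (φ0 + (1 - m * φ0) * ind L k) * v k)
      = φ0 * (m * p + (r - p)) + (1 - m * φ0) * r := by
    have hpt : ∀ k, (φ0 + (1 - m * φ0) * ind L k) * v k
        = φ0 * v k + ((1 - m * φ0) * r) * ind L k := by
      intro k
      rcases eq_or_ne k L with h | h
      · subst h
        have h1 : ind L L = 1 := by unfold ind; rw [if_pos rfl]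
        simp only [hvdef, h1]
        ring
      · have h0 : ind L k = 0 := by unfold ind; rw [if_neg (Ne.symm h)]
        rw [h0]; ring
    rw [Finset.sum_congr rfl fun k _ => hpt k]
    rw [Finset.sum_add_distrib, ← Finset.mul_sum, ← Finset.mul_sum, hS, sum_ind]
    ring
  funext i
  rw [ngm_mulVec hM L hL, hS, hW]
  simp only [Pi.smul_apply, smul_eq_mul]
  rcases eq_or_ne i L with h | h
  · subst h
    have h1 : ind L L = 1 := by unfold ind; rw [if_pos rfl]
    rw [hvL, h1]
    simp only [hB21, hB11, hB12, hB22, hcdef, hddef] at e2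
    linear_combination e2.symm
  · have h0 : ind L i = 0 := by unfold ind; rw [if_neg (Ne.symm h)]
    have hvi : v i = p := by simp only [hvdef, h0]; ring
    rw [hvi, h0]
    simp only [hB21, hB11, hB12, hB22, hcdef, hddef] at e1
    linear_combination e1.symm

lemma root_bound {T D μ : ℝ} (hT : 0 ≤ T) (hD0 : 0 ≤ D) (hD1 : D < 1)
    (hq : 0 < 1 - T + D) (h : μ ^ 2 - T * μ + D = 0) : |μ| < 1 := by
  have hμ0 : 0 ≤ μ := by nlinarith [sq_nonneg μ]
  rw [abs_of_nonneg hμ0]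
  by_contra h1
  push_neg at h1
  nlinarith [mul_nonneg (by linarith : (0:ℝ) ≤ μ - 1) (by linarith : (0:ℝ) ≤ μ - D),
    mul_pos hq (show (0:ℝ) < μ by linarith)]

lemma exists_root_gt_one {T D : ℝ} (h : 1 - T + D < 0) :
    ∃ μ : ℝ, 1 < μ ∧ μ ^ 2 - T * μ + D = 0 := by
  have hnn : 0 ≤ T ^ 2 - 4 * D := by nlinarith [sq_nonneg (T - 2)]
  refine ⟨(T + Real.sqrt (T ^ 2 - 4 * D)) / 2, ?_, ?_⟩
  · have hs := Real.sq_sqrt hnn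
    have hsnn := Real.sqrt_nonneg (T ^ 2 - 4 * D)
    nlinarith [hs, hsnn, sq_nonneg (Real.sqrt (T ^ 2 - 4 * D) - (2 - T))]
  · have hs := Real.sq_sqrt hnn
    linear_combination (1/4 : ℝ) * hs

lemma pos_factor {m X : ℝ} (hm : 0 < m) (h : 0 < m * X) : 0 < X := by
  nlinarith

lemma neg_factor {m X : ℝ} (hm : 0 < m) (h : m * X < 0) : X < 0 := by
  nlinarith

end FCaux
set_option maxHeartbeats 4000000 in
lemma part_i_stable {M : ℕ} {β0 γ ζ : ℝ}
    (hM : 3 ≤ M) (hβ0 : 0 < β0) (hβγ : β0 < γ) (hζpos : 0 < ζ)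
    (hγ : 0 < γ) (hm3 : (3 : ℝ) ≤ (M : ℝ)) (hR0 : 0 < β0 / γ) (hR1 : β0 / γ < 1) :
    ∀ φ0 : ℝ, γ / β0 < ζ → ζ < 1 + (M : ℝ) * (1 - β0 / γ) / (β0 / γ) →
      0 < φ0 → φ0 ≤ 1 / ((M : ℝ) - 1) →
      |φ0 - 1 / (M : ℝ)| <
        (1 / (M : ℝ)) * Real.sqrt
          (((M : ℝ) * (1 - β0 / γ) - (β0 / γ) * (ζ - 1)) /
            ((β0 / γ) * ((M : ℝ) * ζ * (1 - β0 / γ) - (ζ - 1)))) →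
      ∀ μ ∈ spectrum ℝ (ngm M (starBeta M β0 ζ) γ (fcFlux M φ0)),
        |μ| < 1 := by
  intro φ0 hz1 hz2 hφp hφle habs μ hμ
  have hdich := FCaux.eigen_cases hM hμ
  set R := β0 / γ with hRdef
  set m := (M : ℝ) with hmdef
  -- basic flux bounds
  have hφhalf : φ0 ≤ 1 / 2 := by
    refine le_trans hφle ?_
    rw [div_le_div_iff₀ (by linarith) (by norm_num)]
    linarith
  have hφm1 : (m - 1) * φ0 ≤ 1 := by
    have h := mul_le_mul_of_nonneg_left hφle (by linarith : (0:ℝ) ≤ m - 1)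
    have h2 : (m - 1) * (1 / (m - 1)) = 1 :=
      mul_one_div_cancel (by linarith : m - 1 ≠ 0)
    linarith
  have ha_ub : 1 - m * φ0 < 1 := by nlinarith
  have ha_lb : -1 < 1 - m * φ0 := by nlinarith
  have ha2 : (1 - m * φ0) ^ 2 < 1 := by nlinarith
  -- window facts
  have hzR1 : 1 < ζ * R := by
    have h := mul_lt_mul_of_pos_right hz1 hR0
    have h2 : γ / β0 * R = 1 := by rw [hRdef]; field_simp
    linarith
  have hzR2 : ζ * R < m - (m - 1) * R := by
    have h := mul_lt_mul_of_pos_right hz2 hR0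
    have h2 : (1 + m * (1 - R) / R) * R = m - (m - 1) * R := by
      rw [hRdef]; field_simp; ring
    linarith
  have hζ1 : 1 < ζ := by nlinarith
  have hN : 0 < m * (1 - R) - R * (ζ - 1) := by nlinarith
  have hΔ : 0 < R * (m * ζ * (1 - R) - (ζ - 1)) := by
    nlinarith [mul_pos (sub_pos.mpr hzR1) (show (0:ℝ) < m * (1 - R) by nlinarith)]
  -- |x| < φ̃ gives the key inequality
  have harg : 0 ≤ (m * (1 - R) - R * (ζ - 1)) / (R * (m * ζ * (1 - R) - (ζ - 1))) :=
    le_of_lt (div_pos hN hΔ)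
  have hkey : (1 - m * φ0) ^ 2 * (R * (m * ζ * (1 - R) - (ζ - 1)))
      < m * (1 - R) - R * (ζ - 1) := by
    have h1 := mul_self_lt_mul_self (abs_nonneg (φ0 - 1 / m)) habs
    rw [abs_mul_abs_self] at h1
    have hs := Real.sq_sqrt harg
    have hx2 : (φ0 - 1 / m) ^ 2 < (1 / m) ^ 2
        * ((m * (1 - R) - R * (ζ - 1)) / (R * (m * ζ * (1 - R) - (ζ - 1)))) := by
      nlinarith [h1, hs]
    have hexp : (1 - m * φ0) ^ 2 = m ^ 2 * (φ0 - 1 / m) ^ 2 := by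
      field_simp
      ring
    have hm2 : m ^ 2 * (1 / m) ^ 2 = 1 := by field_simp
    have h3 : (1 - m * φ0) ^ 2
        < (m * (1 - R) - R * (ζ - 1)) / (R * (m * ζ * (1 - R) - (ζ - 1))) := by
      calc (1 - m * φ0) ^ 2 = m ^ 2 * (φ0 - 1 / m) ^ 2 := hexp
        _ < m ^ 2 * ((1 / m) ^ 2 * ((m * (1 - R) - R * (ζ - 1))
            / (R * (m * ζ * (1 - R) - (ζ - 1))))) := by
          have hm2pos : (0:ℝ) < m ^ 2 := by positivity
          exact (mul_lt_mul_iff_right₀ hm2pos).mpr hx2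
        _ = _ := by rw [← mul_assoc, hm2, one_mul]
    exact (lt_div_iff₀ hΔ).mp h3
  rcases hdich with hca | hcb
  · rw [hca, abs_of_nonneg (by positivity)]
    nlinarith
  · -- quadratic root case
    have hT0 : 0 ≤ R * (1 + (1 - m * φ0) ^ 2)
        + R * (ζ - 1) * (φ0 * (2 - m * φ0) + (1 - m * φ0) ^ 2) := by
      nlinarith [sq_nonneg (1 - m * φ0),
        mul_nonneg (mul_nonneg hR0.le (by linarith : (0:ℝ) ≤ ζ - 1))
          (show (0:ℝ) ≤ φ0 * (2 - m * φ0) + (1 - m * φ0) ^ 2 by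
            nlinarith [sq_nonneg (1 - m * φ0)])]
    have hD0 : 0 ≤ ζ * R ^ 2 * (1 - m * φ0) ^ 2 := by positivity
    have hDk : ζ * R ^ 2 * (m * (1 - R) - R * (ζ - 1))
        < R * (m * ζ * (1 - R) - (ζ - 1)) := by
      rcases le_or_gt (1 - ζ * R ^ 2) 0 with hcase | hcase
      · nlinarith [mul_pos (mul_pos hR0 hζpos) (pow_pos (sub_pos.mpr hR1) 2),
          mul_nonneg (mul_nonneg hR0.le (by linarith : (0:ℝ) ≤ ζ - 1))
            (by linarith : (0:ℝ) ≤ ζ * R ^ 2 - 1)]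
      · have hRz : 0 < ζ * R ^ 2 - R * 1 := by nlinarith
        have hstep : R * (ζ - 1) * (1 - ζ * R ^ 2) < m * (1 - R) * (1 - R) := by
          have hNlt : R * (ζ - 1) < m * (1 - R) := by linarith
          have hlt2 : 1 - ζ * R ^ 2 < 1 - R := by nlinarith
          have h0a : (0:ℝ) ≤ R * (ζ - 1) := by nlinarith
          exact mul_lt_mul'' hNlt hlt2 h0a hcase.le
        nlinarith [hstep, mul_pos (mul_pos (show (0:ℝ) < m by linarith)
          (pow_pos (sub_pos.mpr hR1) 2)) (sub_pos.mpr hzR1)]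
    have hD1 : ζ * R ^ 2 * (1 - m * φ0) ^ 2 < 1 := by
      have h1 := mul_lt_mul_of_pos_left hkey (show (0:ℝ) < ζ * R ^ 2 by positivity)
      have h2 : (ζ * R ^ 2 * (1 - m * φ0) ^ 2) * (R * (m * ζ * (1 - R) - (ζ - 1)))
          < 1 * (R * (m * ζ * (1 - R) - (ζ - 1))) := by
        calc (ζ * R ^ 2 * (1 - m * φ0) ^ 2) * (R * (m * ζ * (1 - R) - (ζ - 1)))
            = ζ * R ^ 2 * ((1 - m * φ0) ^ 2 * (R * (m * ζ * (1 - R) - (ζ - 1)))) := by ring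
          _ < ζ * R ^ 2 * (m * (1 - R) - R * (ζ - 1)) := h1
          _ < R * (m * ζ * (1 - R) - (ζ - 1)) := hDk
          _ = 1 * (R * (m * ζ * (1 - R) - (ζ - 1))) := (one_mul _).symm
      exact lt_of_mul_lt_mul_right h2 (le_of_lt hΔ)
    have hq1 : 0 < 1 - (R * (1 + (1 - m * φ0) ^ 2)
        + R * (ζ - 1) * (φ0 * (2 - m * φ0) + (1 - m * φ0) ^ 2))
        + ζ * R ^ 2 * (1 - m * φ0) ^ 2 := by
      have hid : m * (1 - (R * (1 + (1 - m * φ0) ^ 2)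
          + R * (ζ - 1) * (φ0 * (2 - m * φ0) + (1 - m * φ0) ^ 2))
          + ζ * R ^ 2 * (1 - m * φ0) ^ 2)
          = (m * (1 - R) - R * (ζ - 1))
            - (R * (m * ζ * (1 - R) - (ζ - 1))) * (1 - m * φ0) ^ 2 := by ring
      have hmpos : (0:ℝ) < m := by linarith
      refine FCaux.pos_factor hmpos ?_
      rw [hid]
      linarith [hkey]
    exact FCaux.root_bound hT0 hD0 hD1 hq1 hcb

set_option maxHeartbeats 4000000 in
lemma part_i_unstable {M : ℕ} {β0 γ ζ : ℝ}
    (hM : 3 ≤ M) (hβ0 : 0 < β0) (hβγ : β0 < γ) (hζpos : 0 < ζ)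
    (hγ : 0 < γ) (hm3 : (3 : ℝ) ≤ (M : ℝ)) (hR0 : 0 < β0 / γ) (hR1 : β0 / γ < 1) :
    ∀ φ0 : ℝ, γ / β0 < ζ → ζ < 1 + (M : ℝ) * (1 - β0 / γ) / (β0 / γ) →
      0 < φ0 → φ0 ≤ 1 / ((M : ℝ) - 1) →
      (1 / (M : ℝ)) * Real.sqrt
          (((M : ℝ) * (1 - β0 / γ) - (β0 / γ) * (ζ - 1)) /
            ((β0 / γ) * ((M : ℝ) * ζ * (1 - β0 / γ) - (ζ - 1))))
        < |φ0 - 1 / (M : ℝ)| →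
      ∃ μ ∈ spectrum ℝ (ngm M (starBeta M β0 ζ) γ (fcFlux M φ0)),
        1 < μ := by
  intro φ0 hz1 hz2 hφp hφle habs
  set R := β0 / γ with hRdef
  set m := (M : ℝ) with hmdef
  have hzR1 : 1 < ζ * R := by
    have h := mul_lt_mul_of_pos_right hz1 hR0
    have h2 : γ / β0 * R = 1 := by rw [hRdef]; field_simp
    linarith
  have hzR2 : ζ * R < m - (m - 1) * R := by
    have h := mul_lt_mul_of_pos_right hz2 hR0
    have h2 : (1 + m * (1 - R) / R) * R = m - (m - 1) * R := by
      rw [hRdef]; field_simp; ring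
    linarith
  have hN : 0 < m * (1 - R) - R * (ζ - 1) := by nlinarith
  have hΔ : 0 < R * (m * ζ * (1 - R) - (ζ - 1)) := by
    nlinarith [mul_pos (sub_pos.mpr hzR1) (show (0:ℝ) < m * (1 - R) by nlinarith)]
  have harg : 0 ≤ (m * (1 - R) - R * (ζ - 1)) / (R * (m * ζ * (1 - R) - (ζ - 1))) :=
    le_of_lt (div_pos hN hΔ)
  have hkey : m * (1 - R) - R * (ζ - 1)
      < (1 - m * φ0) ^ 2 * (R * (m * ζ * (1 - R) - (ζ - 1))) := by
    have hc0 : (0:ℝ) ≤ (1 / m) * Real.sqrt ((m * (1 - R) - R * (ζ - 1))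
        / (R * (m * ζ * (1 - R) - (ζ - 1)))) := by positivity
    have h1 := mul_self_lt_mul_self hc0 habs
    rw [abs_mul_abs_self] at h1
    have hs := Real.sq_sqrt harg
    have hx2 : (1 / m) ^ 2 * ((m * (1 - R) - R * (ζ - 1))
        / (R * (m * ζ * (1 - R) - (ζ - 1)))) < (φ0 - 1 / m) ^ 2 := by
      nlinarith [h1, hs]
    have hexp : (1 - m * φ0) ^ 2 = m ^ 2 * (φ0 - 1 / m) ^ 2 := by
      field_simp
      ring
    have hm2 : m ^ 2 * (1 / m) ^ 2 = 1 := by field_simp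
    have h3 : (m * (1 - R) - R * (ζ - 1)) / (R * (m * ζ * (1 - R) - (ζ - 1)))
        < (1 - m * φ0) ^ 2 := by
      calc (m * (1 - R) - R * (ζ - 1)) / (R * (m * ζ * (1 - R) - (ζ - 1)))
          = m ^ 2 * ((1 / m) ^ 2 * ((m * (1 - R) - R * (ζ - 1))
            / (R * (m * ζ * (1 - R) - (ζ - 1))))) := by
            rw [← mul_assoc, hm2, one_mul]
        _ < m ^ 2 * (φ0 - 1 / m) ^ 2 := by
            have hm2pos : (0:ℝ) < m ^ 2 := by positivity
            exact (mul_lt_mul_iff_right₀ hm2pos).mpr hx2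
        _ = (1 - m * φ0) ^ 2 := hexp.symm
    exact (div_lt_iff₀ hΔ).mp h3
  have hq1neg : 1 - (R * (1 + (1 - m * φ0) ^ 2)
      + R * (ζ - 1) * (φ0 * (2 - m * φ0) + (1 - m * φ0) ^ 2))
      + ζ * R ^ 2 * (1 - m * φ0) ^ 2 < 0 := by
    have hid : m * (1 - (R * (1 + (1 - m * φ0) ^ 2)
        + R * (ζ - 1) * (φ0 * (2 - m * φ0) + (1 - m * φ0) ^ 2))
        + ζ * R ^ 2 * (1 - m * φ0) ^ 2)
        = (m * (1 - R) - R * (ζ - 1))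
          - (R * (m * ζ * (1 - R) - (ζ - 1))) * (1 - m * φ0) ^ 2 := by ring
    have hmpos : (0:ℝ) < m := by linarith
    refine FCaux.neg_factor hmpos ?_
    rw [hid]
    linarith [hkey]
  obtain ⟨μ, hμ1, hμroot⟩ := FCaux.exists_root_gt_one hq1neg
  exact ⟨μ, FCaux.eigen_exists hM hμroot, hμ1⟩

set_option maxHeartbeats 4000000 in
lemma part_ii {M : ℕ} {β0 γ ζ : ℝ}
    (hM : 3 ≤ M) (hβ0 : 0 < β0) (hβγ : β0 < γ) (hζpos : 0 < ζ)
    (hγ : 0 < γ) (hm3 : (3 : ℝ) ≤ (M : ℝ)) (hR0 : 0 < β0 / γ) (hR1 : β0 / γ < 1) :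
    ζ * β0 < γ →
      ∀ φ0 : ℝ, 0 < φ0 → φ0 ≤ 1 / ((M : ℝ) - 1) →
      ∀ μ ∈ spectrum ℝ (ngm M (starBeta M β0 ζ) γ (fcFlux M φ0)),
        |μ| < 1 := by
  intro hzb φ0 hφp hφle μ hμ
  have hdich := FCaux.eigen_cases hM hμ
  set R := β0 / γ with hRdef
  set m := (M : ℝ) with hmdef
  have hφhalf : φ0 ≤ 1 / 2 := by
    refine le_trans hφle ?_
    rw [div_le_div_iff₀ (by linarith) (by norm_num)]
    linarith
  have hφm1 : (m - 1) * φ0 ≤ 1 := by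
    have h := mul_le_mul_of_nonneg_left hφle (by linarith : (0:ℝ) ≤ m - 1)
    have h2 : (m - 1) * (1 / (m - 1)) = 1 :=
      mul_one_div_cancel (by linarith : m - 1 ≠ 0)
    linarith
  have ha_ub : 1 - m * φ0 < 1 := by nlinarith
  have ha_lb : -1 < 1 - m * φ0 := by nlinarith
  have ha2 : (1 - m * φ0) ^ 2 < 1 := by nlinarith
  have hzR : ζ * R < 1 := by
    have h : ζ * β0 / γ < 1 := (div_lt_one hγ).mpr hzb
    rw [hRdef]
    rw [mul_div_assoc] at h
    exact h
  rcases hdich with hca | hcb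
  · rw [hca, abs_of_nonneg (by positivity)]
    nlinarith
  · have hw0 : (0:ℝ) ≤ φ0 * (2 - m * φ0) + (1 - m * φ0) ^ 2 := by
      nlinarith [sq_nonneg (1 - m * φ0)]
    have hT0 : 0 ≤ R * (1 + (1 - m * φ0) ^ 2)
        + R * (ζ - 1) * (φ0 * (2 - m * φ0) + (1 - m * φ0) ^ 2) := by
      rcases le_or_gt 1 ζ with hc | hc
      · nlinarith [mul_nonneg (mul_nonneg hR0.le (by linarith : (0:ℝ) ≤ ζ - 1)) hw0,
          sq_nonneg (1 - m * φ0)]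
      · have hwm : m * (φ0 * (2 - m * φ0) + (1 - m * φ0) ^ 2)
            = 1 + (m - 1) * (1 - m * φ0) ^ 2 := by ring
        nlinarith [mul_nonneg (mul_nonneg hR0.le hζpos.le) hw0,
          mul_nonneg hR0.le hw0, sq_nonneg (1 - m * φ0), hwm,
          mul_nonneg hR0.le (sq_nonneg (1 - m * φ0))]
    have hD0 : 0 ≤ ζ * R ^ 2 * (1 - m * φ0) ^ 2 := by positivity
    have hD1 : ζ * R ^ 2 * (1 - m * φ0) ^ 2 < 1 := by
      nlinarith [mul_pos hζpos hR0, mul_nonneg hR0.le (sq_nonneg (1 - m * φ0)),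
        mul_nonneg (mul_nonneg hζpos.le hR0.le) (sq_nonneg (1 - m * φ0))]
    have hza : ζ * R * (1 - m * φ0) ^ 2 < 1 := by
      nlinarith [mul_pos hζpos hR0, sq_nonneg (1 - m * φ0)]
    have hq1 : 0 < 1 - (R * (1 + (1 - m * φ0) ^ 2)
        + R * (ζ - 1) * (φ0 * (2 - m * φ0) + (1 - m * φ0) ^ 2))
        + ζ * R ^ 2 * (1 - m * φ0) ^ 2 := by
      have hid : m * (1 - (R * (1 + (1 - m * φ0) ^ 2)
          + R * (ζ - 1) * (φ0 * (2 - m * φ0) + (1 - m * φ0) ^ 2))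
          + ζ * R ^ 2 * (1 - m * φ0) ^ 2)
          = m * (1 - R) * (1 - ζ * R * (1 - m * φ0) ^ 2)
            - R * (ζ - 1) * (1 - (1 - m * φ0) ^ 2) := by ring
      have hmpos : (0:ℝ) < m := by linarith
      refine FCaux.pos_factor hmpos ?_
      rw [hid]
      rcases le_or_gt ζ 1 with hc | hc
      · linarith [mul_pos (mul_pos (show (0:ℝ) < m by linarith)
            (sub_pos.mpr hR1)) (sub_pos.mpr hza),
          mul_nonneg (mul_nonneg (by linarith : (0:ℝ) ≤ 1 - ζ) hR0.le)
            (by nlinarith : (0:ℝ) ≤ 1 - (1 - m * φ0) ^ 2)]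
      · have h1 : 0 < 1 - ζ * R := by linarith
        have h2 : 0 < 1 - (1 - m * φ0) ^ 2 := by nlinarith
        have h3 : 0 < 1 - ζ * R * (1 - m * φ0) ^ 2 := by linarith [hza]
        -- R(ζ-1)(1-a²) < Rζ(1-R)(1-a²)
        have s1 : R * (ζ - 1) * (1 - (1 - m * φ0) ^ 2)
            < R * ζ * (1 - R) * (1 - (1 - m * φ0) ^ 2) := by
          have : ζ - 1 < ζ * (1 - R) := by nlinarith
          nlinarith [mul_pos hR0 h2]
        -- Rζ(1-R)(1-a²) < (1-R)(1-ζRa²)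
        have s2 : R * ζ * (1 - R) * (1 - (1 - m * φ0) ^ 2)
            < (1 - R) * (1 - ζ * R * (1 - m * φ0) ^ 2) := by
          have : ζ * R * (1 - (1 - m * φ0) ^ 2) < 1 - ζ * R * (1 - m * φ0) ^ 2 := by
            nlinarith
          nlinarith [sub_pos.mpr hR1]
        -- (1-R)(1-ζRa²) ≤ m(1-R)(1-ζRa²)
        have s3 : (1 - R) * (1 - ζ * R * (1 - m * φ0) ^ 2)
            ≤ m * ((1 - R) * (1 - ζ * R * (1 - m * φ0) ^ 2)) := by
          nlinarith [mul_pos (sub_pos.mpr hR1) h3]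
        linarith [s1, s2, s3]
    exact FCaux.root_bound hT0 hD0 hD1 hq1 hcb

theorem fullyConnected_ngm_DFE (M : ℕ) (hM : 3 ≤ M) (β0 γ ζ : ℝ)
    (hβ0 : 0 < β0) (hβγ : β0 < γ) (hζpos : 0 < ζ) :
    -- (i) in the window γ/β0 < ζ < ζcrit, flux values near 1/M are stable…
    (∀ φ0 : ℝ, γ / β0 < ζ → ζ < 1 + (M : ℝ) * (1 - β0 / γ) / (β0 / γ) →
      0 < φ0 → φ0 ≤ 1 / ((M : ℝ) - 1) →
      |φ0 - 1 / (M : ℝ)| <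
        (1 / (M : ℝ)) * Real.sqrt
          (((M : ℝ) * (1 - β0 / γ) - (β0 / γ) * (ζ - 1)) /
            ((β0 / γ) * ((M : ℝ) * ζ * (1 - β0 / γ) - (ζ - 1)))) →
      ∀ μ ∈ spectrum ℝ (ngm M (starBeta M β0 ζ) γ (fcFlux M φ0)),
        |μ| < 1) ∧
    -- …and flux values far from 1/M are unstable
    (∀ φ0 : ℝ, γ / β0 < ζ → ζ < 1 + (M : ℝ) * (1 - β0 / γ) / (β0 / γ) →
      0 < φ0 → φ0 ≤ 1 / ((M : ℝ) - 1) →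
      (1 / (M : ℝ)) * Real.sqrt
          (((M : ℝ) * (1 - β0 / γ) - (β0 / γ) * (ζ - 1)) /
            ((β0 / γ) * ((M : ℝ) * ζ * (1 - β0 / γ) - (ζ - 1))))
        < |φ0 - 1 / (M : ℝ)| →
      ∃ μ ∈ spectrum ℝ (ngm M (starBeta M β0 ζ) γ (fcFlux M φ0)),
        1 < μ) ∧
    -- (ii) if ζ·β0 < γ then every admissible flux is stable
    (ζ * β0 < γ →
      ∀ φ0 : ℝ, 0 < φ0 → φ0 ≤ 1 / ((M : ℝ) - 1) →
      ∀ μ ∈ spectrum ℝ (ngm M (starBeta M β0 ζ) γ (fcFlux M φ0)),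
        |μ| < 1) := by
  have hγ : 0 < γ := lt_trans hβ0 hβγ
  have hm3 : (3 : ℝ) ≤ (M : ℝ) := by exact_mod_cast hM
  have hR0 : 0 < β0 / γ := div_pos hβ0 hγ
  have hR1 : β0 / γ < 1 := (div_lt_one hγ).mpr hβγ
  exact ⟨part_i_stable hM hβ0 hβγ hζpos hγ hm3 hR0 hR1,
    part_i_unstable hM hβ0 hβγ hζpos hγ hm3 hR0 hR1,
    part_ii hM hβ0 hβγ hζpos hγ hm3 hR0 hR1⟩
end
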